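/- arXiv:2605.20151 — 4 statements merged into one kernel-verified Lean document; each statement's English description precedes it below -/
import Mathlib

section
/- Under the asymptotic-covariance recursion of interactive M-estimation, every model that receives information from an unstable source collapses: for every μ ∈ M_l^c, lim_{t→∞} Tr(Σ_{t,μ,μ}) / Tr(V*) = ∞. (Here r_{t,μ} = Tr(Σ_{t,μ,μ}) is the asymptotic risk of the interactively trained M-estimator at node μ and r*_{t,μ} = Tr(V*) is the oracle asymptotic risk, so the asymptotic risk ratio r_{t,μ}/r*_{t,μ} diverges.) -/
open Matrix Finset Filter

noncomputable section

/-- In-neighbourhood of `μ` in the directed graph with edge set `E`. -/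
def Nin {K : ℕ} (E : Finset (Fin K × Fin K)) (μ : Fin K) : Finset (Fin K) :=
  Finset.univ.filter (fun ν => (ν, μ) ∈ E)

/-- The set of learning models (those with at least one incoming edge). -/
def Ml {K : ℕ} (E : Finset (Fin K × Fin K)) : Finset (Fin K) :=
  Finset.univ.filter (fun μ => Nin E μ ≠ ∅)

/-- The set of models with no incoming edge (stable data sources). -/
def Mu {K : ℕ} (E : Finset (Fin K × Fin K)) : Finset (Fin K) :=
  Finset.univ.filter (fun μ => Nin E μ = ∅)

/-- The edge relation: `EdgeRel E a b` iff `(a, b) ∈ E`. -/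
def EdgeRel {K : ℕ} (E : Finset (Fin K × Fin K)) : Fin K → Fin K → Prop :=
  fun a b => (a, b) ∈ E

open Classical in
/-- Models in `M_l` not reachable by a directed path from any node of `M_u`. -/
def MlInf {K : ℕ} (E : Finset (Fin K × Fin K)) : Finset (Fin K) :=
  (Ml E).filter (fun μ => ∀ ν ∈ Mu E, ¬ Relation.TransGen (EdgeRel E) ν μ)

open Classical in
/-- Models in `M_l^∞` together with models reachable from some node of `M_l^∞`. -/
def Mlc {K : ℕ} (E : Finset (Fin K × Fin K)) : Finset (Fin K) :=
  (Ml E).filter (fun μ => μ ∈ MlInf E ∨ ∃ ν ∈ MlInf E, Relation.TransGen (EdgeRel E) ν μ)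

/-- The non-collapsing learning models. -/
def Mlnc {K : ℕ} (E : Finset (Fin K × Fin K)) : Finset (Fin K) := Ml E \ Mlc E

/-- The total limiting proportion `w_{t,ν} = ∑_{m ∈ Nin(ν)} p̄_{t,m→ν}`. -/
def wgt {K : ℕ} (E : Finset (Fin K × Fin K)) (pbar : ℕ → Fin K → Fin K → ℝ)
    (t : ℕ) (ν : Fin K) : ℝ :=
  ∑ m ∈ Nin E ν, pbar t m ν

/-- The row-stochastic matrix `P̄_t`: `P̄_{t,μ,ν} = p̄_{t,ν→μ}/w_{t,μ}` if `μ ∈ M_l` and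
`ν ∈ Nin(μ)`, `P̄_{t,μ,μ} = 1` if `μ ∈ M_u`, and `0` otherwise. -/
def Pbar {K : ℕ} (E : Finset (Fin K × Fin K)) (pbar : ℕ → Fin K → Fin K → ℝ)
    (t : ℕ) : Matrix (Fin K) (Fin K) ℝ :=
  Matrix.of fun μ ν =>
    if μ ∈ Ml E then (if ν ∈ Nin E μ then pbar t ν μ / wgt E pbar t μ else 0)
    else (if μ = ν then 1 else 0)

/-- `Jmat P t s = P_t P_{t−1} ⋯ P_s` (equal to `I` when `s = t + 1`). -/
def Jmat {K : ℕ} (P : ℕ → Matrix (Fin K) (Fin K) ℝ) (t s : ℕ) : Matrix (Fin K) (Fin K) ℝ :=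
  ((List.range' s (t + 1 - s)).reverse.map P).prod

/-- The Kronecker product `Q ⊗ I_d`, as a `dK × dK` matrix with blocks indexed by `Fin K`. -/
def kronId {K d : ℕ} (Q : Matrix (Fin K) (Fin K) ℝ) :
    Matrix (Fin K × Fin d) (Fin K × Fin d) ℝ :=
  Matrix.of fun p r => Q p.1 r.1 * (if p.2 = r.2 then 1 else 0)

/-- The block matrix `Σ_0`: `Σ_{0,μ,ν} = (1/p̄_{0,μ}) V*` if `μ = ν ∉ M_nature`, else `0`. -/
def Sigma0 {K d : ℕ} (Mnature : Finset (Fin K)) (p0 : Fin K → ℝ)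
    (Vstar : Matrix (Fin d) (Fin d) ℝ) : Matrix (Fin K × Fin d) (Fin K × Fin d) ℝ :=
  Matrix.of fun p r =>
    if p.1 = r.1 ∧ p.1 ∉ Mnature then (1 / p0 p.1) * Vstar p.2 r.2 else 0

/-- The block matrix `V_t`: `V_{t,μ,ν} = (q_{t,μ∩ν}/(w_{t,μ}w_{t,ν})) V*` if `μ, ν ∈ M_l`,
else `0`. -/
def Vt {K d : ℕ} (E : Finset (Fin K × Fin K)) (pbar : ℕ → Fin K → Fin K → ℝ)
    (q : ℕ → Fin K → Fin K → ℝ) (Vstar : Matrix (Fin d) (Fin d) ℝ) (t : ℕ) :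
    Matrix (Fin K × Fin d) (Fin K × Fin d) ℝ :=
  Matrix.of fun p r =>
    if p.1 ∈ Ml E ∧ r.1 ∈ Ml E then
      (q t p.1 r.1 / (wgt E pbar t p.1 * wgt E pbar t r.1)) * Vstar p.2 r.2
    else 0

end

lemma kron_mul_apply {K d : ℕ} (Q : Matrix (Fin K) (Fin K) ℝ)
    (B : Matrix (Fin K × Fin d) (Fin K × Fin d) ℝ) (μ : Fin K) (a : Fin d)
    (r : Fin K × Fin d) :
    (kronId Q * B : Matrix (Fin K × Fin d) (Fin K × Fin d) ℝ) (μ, a) r =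
      ∑ x, Q μ x * B (x, a) r := by
  rw [Matrix.mul_apply, Fintype.sum_prod_type]
  refine Finset.sum_congr rfl fun x _ => ?_
  have : ∀ i : Fin d, kronId Q (μ, a) (x, i) = Q μ x * (if a = i then 1 else 0) := fun i => rfl
  simp only [this, mul_ite, mul_one, mul_zero, ite_mul, zero_mul]
  rw [Finset.sum_ite_eq Finset.univ a (fun i => Q μ x * B (x, i) r)]
  simp

lemma kron_conj_apply {K d : ℕ} (Q : Matrix (Fin K) (Fin K) ℝ)
    (B : Matrix (Fin K × Fin d) (Fin K × Fin d) ℝ) (μ ν : Fin K) (a b : Fin d) :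
    ((kronId Q * B * (kronId Q)ᵀ : Matrix (Fin K × Fin d) (Fin K × Fin d) ℝ) (μ, a) (ν, b)) =
      ∑ x, ∑ y, Q μ x * Q ν y * B (x, a) (y, b) := by
  rw [Matrix.mul_apply, Fintype.sum_prod_type]
  have step : ∀ y : Fin K,
      (∑ j : Fin d, (kronId Q * B : Matrix (Fin K × Fin d) (Fin K × Fin d) ℝ) (μ, a) (y, j)
        * (kronId Q)ᵀ (y, j) (ν, b)) = ∑ x, Q ν y * (Q μ x * B (x, a) (y, b)) := by
    intro y
    have h2 : ∀ j : Fin d, (kronId Q)ᵀ (y, j) (ν, b) = Q ν y * (if b = j then 1 else 0) := by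
      intro j
      show Q ν y * (if b = j then 1 else 0) = _
      rfl
    simp only [h2, kron_mul_apply, mul_ite, mul_one, mul_zero, ite_mul, zero_mul]
    rw [Finset.sum_ite_eq Finset.univ b]
    simp only [Finset.mem_univ, if_true, Finset.sum_mul]
    exact Finset.sum_congr rfl fun x _ => by ring
  simp only [step]
  rw [Finset.sum_comm]
  refine Finset.sum_congr rfl fun x _ => Finset.sum_congr rfl fun y _ => by ring

noncomputable def Jf {K : ℕ} (Qe : ℕ → Fin K → Fin K → ℝ) (s : ℕ) : ℕ → Fin K → Fin K → ℝ
  | 0 => fun μ a => if μ = a then 1 else 0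
  | (t+1) =>
    if t+1 ≤ s then (fun μ a => if μ = a then 1 else 0)
    else fun μ a => ∑ y, Qe (t+1) μ y * Jf Qe s t y a

lemma Jf_id {K : ℕ} (Qe : ℕ → Fin K → Fin K → ℝ) (t : ℕ) :
    Jf Qe t t = fun μ a => if μ = a then 1 else 0 := by
  cases t with
  | zero => rfl
  | succ u => simp [Jf]

lemma Jf_step {K : ℕ} (Qe : ℕ → Fin K → Fin K → ℝ) (s u : ℕ) (h : s ≤ u) (μ a : Fin K) :
    Jf Qe s (u+1) μ a = ∑ y, Qe (u+1) μ y * Jf Qe s u y a := by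
  have : ¬ (u + 1 ≤ s) := by omega
  simp only [Jf, if_neg this]

lemma Jf_nonneg {K : ℕ} (Qe : ℕ → Fin K → Fin K → ℝ)
    (hQ : ∀ t, 1 ≤ t → ∀ μ ν, 0 ≤ Qe t μ ν) (s : ℕ) :
    ∀ t μ a, 0 ≤ Jf Qe s t μ a := by
  intro t
  induction t with
  | zero => intro μ a; simp only [Jf]; positivity
  | succ u ih =>
    intro μ a
    by_cases h : u + 1 ≤ s
    · simp only [Jf, if_pos h]; positivity
    · simp only [Jf, if_neg h]
      exact Finset.sum_nonneg fun y _ =>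
        mul_nonneg (hQ (u+1) (Nat.succ_le_succ (Nat.zero_le u)) μ y) (ih y a)

lemma Jf_mass_S {K : ℕ} (Qe : ℕ → Fin K → Fin K → ℝ) (S : Finset (Fin K))
    (hQ : ∀ t, 1 ≤ t → ∀ μ ν, 0 ≤ Qe t μ ν)
    (hrow : ∀ t, 1 ≤ t → ∀ x ∈ S, 1 ≤ ∑ y ∈ S, Qe t x y) (s : ℕ) :
    ∀ t, ∀ x ∈ S, 1 ≤ ∑ a ∈ S, Jf Qe s t x a := by
  intro t
  induction t with
  | zero =>
    intro x hx
    simp only [Jf]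
    rw [Finset.sum_ite_eq S x (fun _ => (1:ℝ)), if_pos hx]
  | succ u ih =>
    intro x hx
    by_cases h : u + 1 ≤ s
    · simp only [Jf, if_pos h]
      rw [Finset.sum_ite_eq S x (fun _ => (1:ℝ)), if_pos hx]
    · simp only [Jf, if_neg h]
      calc (1:ℝ) ≤ ∑ y ∈ S, Qe (u+1) x y := hrow (u+1) (Nat.succ_le_succ (Nat.zero_le u)) x hx
        _ ≤ ∑ y ∈ S, Qe (u+1) x y * ∑ a ∈ S, Jf Qe s u y a := by
            refine Finset.sum_le_sum fun y hy => ?_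
            have := ih y hy
            nlinarith [hQ (u+1) (Nat.succ_le_succ (Nat.zero_le u)) x y]
        _ ≤ ∑ y : Fin K, Qe (u+1) x y * ∑ a ∈ S, Jf Qe s u y a := by
            refine Finset.sum_le_sum_of_subset_of_nonneg (Finset.subset_univ S) fun y _ _ => ?_
            exact mul_nonneg (hQ (u+1) (Nat.succ_le_succ (Nat.zero_le u)) x y)
              (Finset.sum_nonneg fun a _ => Jf_nonneg Qe hQ s u y a)
        _ = ∑ y : Fin K, ∑ a ∈ S, Qe (u+1) x y * Jf Qe s u y a :=
            Finset.sum_congr rfl fun y _ => Finset.mul_sum _ _ _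
        _ = ∑ a ∈ S, ∑ y : Fin K, Qe (u+1) x y * Jf Qe s u y a := Finset.sum_comm

lemma Jf_mass_path {K : ℕ} (Qe : ℕ → Fin K → Fin K → ℝ) (S : Finset (Fin K))
    (α : ℝ) (hα0 : 0 ≤ α)
    (hQ : ∀ t, 1 ≤ t → ∀ μ ν, 0 ≤ Qe t μ ν)
    (hrow : ∀ t, 1 ≤ t → ∀ x ∈ S, 1 ≤ ∑ y ∈ S, Qe t x y)
    (R : ℕ → Fin K → Prop)
    (hR0 : ∀ μ, R 0 μ → μ ∈ S)
    (hRs : ∀ n μ, R (n+1) μ → ∃ ν, R n ν ∧ ∀ t, 1 ≤ t → α ≤ Qe t μ ν) :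
    ∀ n μ, R n μ → ∀ s t, s + n ≤ t → α ^ n ≤ ∑ a ∈ S, Jf Qe s t μ a := by
  intro n
  induction n with
  | zero =>
    intro μ hμ s t _
    simpa using Jf_mass_S Qe S hQ hrow s t μ (hR0 μ hμ)
  | succ m ih =>
    intro μ hμ s t ht
    obtain ⟨ν, hν, hQν⟩ := hRs m μ hμ
    obtain ⟨u, rfl⟩ : ∃ u, t = u + 1 := ⟨t - 1, by omega⟩
    have hsu : s ≤ u := by omega
    simp only [Jf_step Qe s u hsu]
    have hswap : ∑ a ∈ S, ∑ y : Fin K, Qe (u+1) μ y * Jf Qe s u y a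
        = ∑ y : Fin K, Qe (u+1) μ y * ∑ a ∈ S, Jf Qe s u y a := by
      rw [Finset.sum_comm]
      exact Finset.sum_congr rfl fun y _ => (Finset.mul_sum _ _ _).symm
    rw [hswap]
    have hterm : α * α ^ m ≤ Qe (u+1) μ ν * ∑ a ∈ S, Jf Qe s u ν a := by
      have h1 : α ≤ Qe (u+1) μ ν := hQν (u+1) (Nat.succ_le_succ (Nat.zero_le u))
      have h2 : α ^ m ≤ ∑ a ∈ S, Jf Qe s u ν a := ih ν hν s u (by omega)
      exact mul_le_mul h1 h2 (pow_nonneg hα0 m) ((hα0.trans h1))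
    calc α ^ (m+1) = α * α ^ m := by ring
      _ ≤ Qe (u+1) μ ν * ∑ a ∈ S, Jf Qe s u ν a := hterm
      _ ≤ ∑ y : Fin K, Qe (u+1) μ y * ∑ a ∈ S, Jf Qe s u y a := by
          refine Finset.single_le_sum (f := fun y => Qe (u+1) μ y * ∑ a ∈ S, Jf Qe s u y a)
            (fun y _ => ?_) (Finset.mem_univ ν)
          exact mul_nonneg (hQ (u+1) (Nat.succ_le_succ (Nat.zero_le u)) μ y)
            (Finset.sum_nonneg fun a _ => Jf_nonneg Qe hQ s u y a)

lemma fubini4 {K : ℕ} (f g : Fin K → ℝ) (T : Finset ℕ) (S : Finset (Fin K))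
    (J : ℕ → Fin K → Fin K → ℝ) :
    ∑ x' : Fin K, ∑ y' : Fin K, f x' * g y' * (∑ s ∈ T, ∑ a ∈ S, J s x' a * J s y' a)
      = ∑ s ∈ T, ∑ a ∈ S,
          (∑ x' : Fin K, f x' * J s x' a) * (∑ y' : Fin K, g y' * J s y' a) := by
  have expand : ∀ s a,
      (∑ x' : Fin K, f x' * J s x' a) * (∑ y' : Fin K, g y' * J s y' a)
        = ∑ x' : Fin K, ∑ y' : Fin K, f x' * g y' * (J s x' a * J s y' a) := by
    intro s a
    rw [Finset.sum_mul_sum]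
    exact Finset.sum_congr rfl fun x' _ => Finset.sum_congr rfl fun y' _ => by ring
  simp only [expand, Finset.mul_sum]
  calc ∑ x' : Fin K, ∑ y' : Fin K, ∑ s ∈ T, ∑ a ∈ S, f x' * g y' * (J s x' a * J s y' a)
      = ∑ x' : Fin K, ∑ s ∈ T, ∑ y' : Fin K, ∑ a ∈ S, f x' * g y' * (J s x' a * J s y' a) := by
        exact Finset.sum_congr rfl fun x' _ => Finset.sum_comm
    _ = ∑ s ∈ T, ∑ x' : Fin K, ∑ y' : Fin K, ∑ a ∈ S, f x' * g y' * (J s x' a * J s y' a) :=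
        Finset.sum_comm
    _ = ∑ s ∈ T, ∑ x' : Fin K, ∑ a ∈ S, ∑ y' : Fin K, f x' * g y' * (J s x' a * J s y' a) :=
        Finset.sum_congr rfl fun s _ => Finset.sum_congr rfl fun x' _ => Finset.sum_comm
    _ = ∑ s ∈ T, ∑ a ∈ S, ∑ x' : Fin K, ∑ y' : Fin K, f x' * g y' * (J s x' a * J s y' a) :=
        Finset.sum_congr rfl fun s _ => Finset.sum_comm


noncomputable def Qmat {K : ℕ} (E : Finset (Fin K × Fin K)) (pbar : ℕ → Fin K → Fin K → ℝ) :
    ℕ → Fin K → Fin K → ℝ := fun t x y => Pbar E pbar t x y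

def PathToS {K : ℕ} (E : Finset (Fin K × Fin K)) : ℕ → Fin K → Prop
  | 0 => fun x => x ∈ MlInf E
  | (n+1) => fun x => ∃ y, PathToS E n y ∧ (y, x) ∈ E

/-- Under the asymptotic-covariance recursion of interactive M-estimation, every
model receiving information from an unstable source collapses: for every `μ ∈ M_l^c`,
`Tr(Σ_{t,μ,μ}) / Tr(V*) → ∞` as `t → ∞`. -/
theorem stmt2
    {K d : ℕ} (hK : 1 ≤ K) (hd : 1 ≤ d)
    (E : Finset (Fin K × Fin K))
    (α ᾱ : ℝ) (hα0 : 0 < α) (hα1 : α ≤ 1) (hᾱ : 1 ≤ ᾱ)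
    (Mnature : Finset (Fin K)) (hMnat : Mnature ⊆ Mu E)
    (Vstar : Matrix (Fin d) (Fin d) ℝ) (hVpsd : Vstar.PosSemidef) (hVtr : 0 < Vstar.trace)
    (c : ℕ → ℝ) (hc : ∀ t, 0 < c t)
    (hb : ∀ t s : ℕ, α ≤ c t / c s ∧ c t / c s ≤ ᾱ)
    (pbar : ℕ → Fin K → Fin K → ℝ)
    (hpbarα : ∀ t, 1 ≤ t → ∀ ν μ : Fin K, (ν, μ) ∈ E → α ≤ pbar t ν μ)
    (hpbarsum : ∀ t, 1 ≤ t → ∑ e ∈ E, pbar t e.1 e.2 ≤ 1)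
    (p0 : Fin K → ℝ) (hp0α : ∀ μ ∉ Mnature, α ≤ p0 μ)
    (hp0sum : ∑ μ ∈ Finset.univ \ Mnature, p0 μ ≤ 1)
    (q : ℕ → Fin K → Fin K → ℝ)
    (hqsymm : ∀ t, 1 ≤ t → ∀ ν₁ ∈ Ml E, ∀ ν₂ ∈ Ml E, q t ν₁ ν₂ = q t ν₂ ν₁)
    (hqnn : ∀ t, 1 ≤ t → ∀ ν₁ ∈ Ml E, ∀ ν₂ ∈ Ml E, 0 ≤ q t ν₁ ν₂)
    (hqle : ∀ t, 1 ≤ t → ∀ ν₁ ∈ Ml E, ∀ ν₂ ∈ Ml E,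
      q t ν₁ ν₂ ≤ min (wgt E pbar t ν₁) (wgt E pbar t ν₂))
    (hqdiag : ∀ t, 1 ≤ t → ∀ ν ∈ Ml E, q t ν ν = wgt E pbar t ν)
    (Sig : ℕ → Matrix (Fin K × Fin d) (Fin K × Fin d) ℝ)
    (hSig0 : Sig 0 = Sigma0 Mnature p0 Vstar)
    (hSigrec : ∀ t, 1 ≤ t → Sig t =
      (c t / c (t - 1)) • (kronId (Pbar E pbar t) * Sig (t - 1) * (kronId (Pbar E pbar t))ᵀ)
        + Vt E pbar q Vstar t) :
    ∀ μ ∈ Mlc E,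
      Tendsto (fun t : ℕ => (∑ a : Fin d, Sig t (μ, a) (μ, a)) / Vstar.trace)
        atTop atTop := by
  classical
  intro μ hμ
  have hc0 : (0:ℝ) < c 0 := hc 0
  have hᾱ0 : (0:ℝ) < ᾱ := lt_of_lt_of_le zero_lt_one hᾱ
  have hαc : (0:ℝ) < ᾱ * c 0 := mul_pos hᾱ0 hc0
  have htrV : Vstar.trace = ∑ a : Fin d, Vstar a a := by
    simp [Matrix.trace, Matrix.diag]
  have hcub : ∀ t, c t ≤ ᾱ * c 0 := by
    intro t
    have h := (hb t 0).2
    rw [div_le_iff₀ hc0] at h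
    linarith
  have hclb : ∀ t, α * c 0 ≤ c t := by
    intro t
    have h := (hb t 0).1
    rw [le_div_iff₀ hc0] at h
    linarith
  have hNin_mem : ∀ x y : Fin K, y ∈ Nin E x ↔ (y, x) ∈ E := by
    intro x y; simp [Nin]
  have hMl_iff : ∀ x : Fin K, x ∈ Ml E ↔ (Nin E x).Nonempty := by
    intro x; simp [Ml, Finset.nonempty_iff_ne_empty]
  have hMl_of_edge : ∀ {y x : Fin K}, (y, x) ∈ E → x ∈ Ml E := by
    intro y x h
    exact (hMl_iff x).mpr ⟨y, (hNin_mem x y).mpr h⟩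
  have hMu_iff : ∀ x : Fin K, x ∈ Mu E ↔ Nin E x = ∅ := by
    intro x; simp [Mu]
  have hpb_nn : ∀ t, 1 ≤ t → ∀ y x : Fin K, (y,x) ∈ E → (0:ℝ) ≤ pbar t y x :=
    fun t ht y x h => le_trans hα0.le (hpbarα t ht y x h)
  have hw_ub : ∀ t, 1 ≤ t → ∀ x : Fin K, wgt E pbar t x ≤ 1 := by
    intro t ht x
    have himg : (Nin E x).image (fun m => (m, x)) ⊆ E := by
      intro e he
      simp only [Finset.mem_image] at he
      obtain ⟨m, hm, rfl⟩ := he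
      exact (hNin_mem x m).mp hm
    have h1 : wgt E pbar t x = ∑ e ∈ (Nin E x).image (fun m => (m, x)), pbar t e.1 e.2 := by
      rw [Finset.sum_image]
      · rfl
      · intro a _ b _ h
        simpa using congrArg Prod.fst h
    rw [h1]
    calc ∑ e ∈ (Nin E x).image (fun m => (m, x)), pbar t e.1 e.2
        ≤ ∑ e ∈ E, pbar t e.1 e.2 :=
          Finset.sum_le_sum_of_subset_of_nonneg himg
            (fun e he _ => hpb_nn t ht e.1 e.2 (by simpa using he))
      _ ≤ 1 := hpbarsum t ht
  have hw_lb : ∀ t, 1 ≤ t → ∀ x ∈ Ml E, α ≤ wgt E pbar t x := by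
    intro t ht x hx
    obtain ⟨m, hm⟩ := (hMl_iff x).mp hx
    calc α ≤ pbar t m x := hpbarα t ht m x ((hNin_mem x m).mp hm)
      _ ≤ wgt E pbar t x :=
        Finset.single_le_sum (fun i hi => hpb_nn t ht i x ((hNin_mem x i).mp hi)) hm
  have hw_pos : ∀ t, 1 ≤ t → ∀ x ∈ Ml E, (0:ℝ) < wgt E pbar t x :=
    fun t ht x hx => lt_of_lt_of_le hα0 (hw_lb t ht x hx)
  have hPapp : ∀ t (x y : Fin K), Pbar E pbar t x y =
      if x ∈ Ml E then (if y ∈ Nin E x then pbar t y x / wgt E pbar t x else 0)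
      else (if x = y then 1 else 0) := fun t x y => rfl
  have hQ0 : ∀ t, 1 ≤ t → ∀ x y : Fin K, 0 ≤ Pbar E pbar t x y := by
    intro t ht x y
    rw [hPapp]
    by_cases hx : x ∈ Ml E
    · simp only [if_pos hx]
      by_cases hy : y ∈ Nin E x
      · simp only [if_pos hy]
        exact div_nonneg (hpb_nn t ht y x ((hNin_mem x y).mp hy)) (hw_pos t ht x hx).le
      · simp [hy]
    · simp only [if_neg hx]
      split <;> norm_num
  have hQedge : ∀ t, 1 ≤ t → ∀ x y : Fin K, (y,x) ∈ E → α ≤ Pbar E pbar t x y := by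
    intro t ht x y he
    have hx := hMl_of_edge he
    have hy : y ∈ Nin E x := (hNin_mem x y).mpr he
    rw [hPapp, if_pos hx, if_pos hy, le_div_iff₀ (hw_pos t ht x hx)]
    nlinarith [hpbarα t ht y x he, hw_ub t ht x, hw_lb t ht x hx, hα0]
  have hQrow : ∀ t, 1 ≤ t → ∀ x ∈ Ml E, ∑ y ∈ Nin E x, Pbar E pbar t x y = 1 := by
    intro t ht x hx
    have hw := hw_pos t ht x hx
    have h2 : ∑ y ∈ Nin E x, Pbar E pbar t x y
        = (∑ y ∈ Nin E x, pbar t y x) / wgt E pbar t x := by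
      rw [Finset.sum_div]
      exact Finset.sum_congr rfl fun y hy => by rw [hPapp, if_pos hx, if_pos hy]
    rw [h2, div_eq_one_iff_eq (ne_of_gt hw)]
    rfl
  have hNinS : ∀ x ∈ MlInf E, Nin E x ⊆ MlInf E := by
    intro x hx y hy
    simp only [MlInf, Finset.mem_filter] at hx
    obtain ⟨hxml, hxno⟩ := hx
    have hedge : EdgeRel E y x := (hNin_mem x y).mp hy
    have hyml : y ∈ Ml E := by
      by_contra hyn
      have hymu : y ∈ Mu E := by
        rw [hMu_iff]
        by_contra h2
        exact hyn ((hMl_iff y).mpr (Finset.nonempty_iff_ne_empty.mpr h2))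
      exact hxno y hymu (Relation.TransGen.single hedge)
    simp only [MlInf, Finset.mem_filter]
    exact ⟨hyml, fun ν hν htg => hxno ν hν (htg.tail hedge)⟩
  have hQS : ∀ t, 1 ≤ t → ∀ x ∈ MlInf E, 1 ≤ ∑ y ∈ MlInf E, Pbar E pbar t x y := by
    intro t ht x hx
    have hxml : x ∈ Ml E := Finset.mem_of_mem_filter x hx
    calc (1:ℝ) = ∑ y ∈ Nin E x, Pbar E pbar t x y := (hQrow t ht x hxml).symm
      _ ≤ ∑ y ∈ MlInf E, Pbar E pbar t x y :=
          Finset.sum_le_sum_of_subset_of_nonneg (hNinS x hx) (fun y _ _ => hQ0 t ht x y)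
  have hVt_tr : ∀ t (x y : Fin K), (∑ a : Fin d, Vt E pbar q Vstar t (x,a) (y,a)) =
      (if x ∈ Ml E ∧ y ∈ Ml E then
        q t x y / (wgt E pbar t x * wgt E pbar t y) * Vstar.trace else 0) := by
    intro t x y
    by_cases hxy : x ∈ Ml E ∧ y ∈ Ml E
    · rw [if_pos hxy]
      have h3 : ∀ a : Fin d, Vt E pbar q Vstar t (x,a) (y,a) =
          q t x y / (wgt E pbar t x * wgt E pbar t y) * Vstar a a := by
        intro a
        show (if _ ∈ Ml E ∧ _ ∈ Ml E then _ else _) = _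
        rw [if_pos hxy]
      rw [Finset.sum_congr rfl (fun a _ => h3 a), ← Finset.mul_sum, htrV]
    · rw [if_neg hxy]
      have h3 : ∀ a : Fin d, Vt E pbar q Vstar t (x,a) (y,a) = 0 := by
        intro a
        show (if _ ∈ Ml E ∧ _ ∈ Ml E then _ else _) = _
        rw [if_neg hxy]
      simp [h3]
  have hW_nn : ∀ t, 1 ≤ t → ∀ x y : Fin K,
      0 ≤ (if x ∈ Ml E ∧ y ∈ Ml E then
        q t x y / (wgt E pbar t x * wgt E pbar t y) * Vstar.trace else 0) := by
    intro t ht x y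
    split
    · next h =>
        exact mul_nonneg (div_nonneg (hqnn t ht x h.1 y h.2)
          (mul_nonneg (hw_pos t ht x h.1).le (hw_pos t ht y h.2).le)) hVtr.le
    · exact le_refl 0
  have hW_diag : ∀ t, 1 ≤ t → ∀ x ∈ Ml E,
      (1/(ᾱ * c 0)) * (c t * Vstar.trace) ≤
        q t x x / (wgt E pbar t x * wgt E pbar t x) * Vstar.trace := by
    intro t ht x hx
    rw [hqdiag t ht x hx]
    have hw1 := hw_ub t ht x
    have hwp := hw_pos t ht x hx
    have h1 : wgt E pbar t x / (wgt E pbar t x * wgt E pbar t x) = 1 / wgt E pbar t x := by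
      rw [div_eq_div_iff (mul_pos hwp hwp).ne' hwp.ne']
      ring
    rw [h1]
    have h2 : c t / (ᾱ * c 0) ≤ 1 := by
      rw [div_le_one hαc]; exact hcub t
    have h3 : (1:ℝ) ≤ 1 / wgt E pbar t x := by
      rw [le_div_iff₀ hwp]; linarith
    calc (1/(ᾱ * c 0)) * (c t * Vstar.trace) = (c t/(ᾱ * c 0)) * Vstar.trace := by ring
      _ ≤ (1 / wgt E pbar t x) * Vstar.trace :=
          mul_le_mul_of_nonneg_right (by linarith) hVtr.le
  have hFrec : ∀ t (x y : Fin K),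
      (∑ a : Fin d, Sig (t+1) (x,a) (y,a)) =
        (c (t+1) / c t) * (∑ x' : Fin K, ∑ y' : Fin K,
          Pbar E pbar (t+1) x x' * Pbar E pbar (t+1) y y' * (∑ a : Fin d, Sig t (x',a) (y',a)))
        + (if x ∈ Ml E ∧ y ∈ Ml E then
            q (t+1) x y / (wgt E pbar (t+1) x * wgt E pbar (t+1) y) * Vstar.trace else 0) := by
    intro t x y
    have hrec := hSigrec (t+1) (Nat.le_add_left 1 t)
    rw [Nat.add_sub_cancel] at hrec
    have hentry : ∀ a : Fin d, Sig (t+1) (x,a) (y,a) =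
        (c (t+1)/c t) * (∑ x' : Fin K, ∑ y' : Fin K,
          Pbar E pbar (t+1) x x' * Pbar E pbar (t+1) y y' * Sig t (x',a) (y',a))
        + Vt E pbar q Vstar (t+1) (x,a) (y,a) := by
      intro a
      rw [hrec, Matrix.add_apply, Matrix.smul_apply, smul_eq_mul, kron_conj_apply]
    rw [Finset.sum_congr rfl (fun a _ => hentry a), Finset.sum_add_distrib, hVt_tr,
      ← Finset.mul_sum]
    congr 2
    calc ∑ a : Fin d, ∑ x' : Fin K, ∑ y' : Fin K,
          Pbar E pbar (t+1) x x' * Pbar E pbar (t+1) y y' * Sig t (x',a) (y',a)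
        = ∑ x' : Fin K, ∑ a : Fin d, ∑ y' : Fin K,
          Pbar E pbar (t+1) x x' * Pbar E pbar (t+1) y y' * Sig t (x',a) (y',a) :=
          Finset.sum_comm
      _ = ∑ x' : Fin K, ∑ y' : Fin K, ∑ a : Fin d,
          Pbar E pbar (t+1) x x' * Pbar E pbar (t+1) y y' * Sig t (x',a) (y',a) :=
          Finset.sum_congr rfl fun x' _ => Finset.sum_comm
      _ = ∑ x' : Fin K, ∑ y' : Fin K,
          Pbar E pbar (t+1) x x' * Pbar E pbar (t+1) y y' * ∑ a : Fin d, Sig t (x',a) (y',a) :=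
          Finset.sum_congr rfl fun x' _ => Finset.sum_congr rfl fun y' _ =>
            (Finset.mul_sum _ _ _).symm
  have hF0 : ∀ x y : Fin K, 0 ≤ ∑ a : Fin d, Sig 0 (x,a) (y,a) := by
    intro x y
    rw [hSig0]
    have h3 : ∀ a : Fin d, Sigma0 Mnature p0 Vstar (x,a) (y,a) =
        if x = y ∧ x ∉ Mnature then (1/p0 x) * Vstar a a else 0 := fun a => rfl
    rw [Finset.sum_congr rfl (fun a _ => h3 a)]
    by_cases h : x = y ∧ x ∉ Mnature
    · simp only [if_pos h, ← Finset.mul_sum, ← htrV]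
      have hp := hp0α x h.2
      have hpp : (0:ℝ) < p0 x := lt_of_lt_of_le hα0 hp
      positivity
    · simp [if_neg h]
  have hcombine : ∀ (A B D W C0 C1 b : ℝ), C0 * A ≤ D → C1 * B ≤ W → 0 ≤ b →
      C1 = b * C0 → C1 * (A+B) ≤ b * D + W := by
    intro A B D W C0 C1 b h1 h2 h3 h4
    have h5 : b * (C0 * A) ≤ b * D := mul_le_mul_of_nonneg_left h1 h3
    calc C1 * (A+B) = b * (C0 * A) + C1 * B := by rw [h4]; ring
      _ ≤ b * D + W := add_le_add h5 h2
  have hG : ∀ t, ∀ x y : Fin K,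
      (1/(ᾱ * c 0)) * (c t * Vstar.trace) *
        (∑ s ∈ Finset.Icc 1 t, ∑ a ∈ MlInf E,
          Jf (Qmat E pbar) s t x a * Jf (Qmat E pbar) s t y a)
      ≤ ∑ a : Fin d, Sig t (x,a) (y,a) := by
    intro t
    induction t with
    | zero =>
      intro x y
      rw [Finset.Icc_eq_empty (by omega : ¬ (1:ℕ) ≤ 0)]
      simpa using hF0 x y
    | succ t ih =>
      intro x y
      rw [hFrec t x y]
      have stepA : (1/(ᾱ * c 0)) * (c t * Vstar.trace) *
          (∑ s ∈ Finset.Icc 1 t, ∑ a ∈ MlInf E,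
            Jf (Qmat E pbar) s (t+1) x a * Jf (Qmat E pbar) s (t+1) y a)
          ≤ ∑ x' : Fin K, ∑ y' : Fin K,
              Pbar E pbar (t+1) x x' * Pbar E pbar (t+1) y y' *
                (∑ a : Fin d, Sig t (x',a) (y',a)) := by
        have e1 : ∑ s ∈ Finset.Icc 1 t, ∑ a ∈ MlInf E,
            Jf (Qmat E pbar) s (t+1) x a * Jf (Qmat E pbar) s (t+1) y a
            = ∑ s ∈ Finset.Icc 1 t, ∑ a ∈ MlInf E,
              (∑ x' : Fin K, Pbar E pbar (t+1) x x' * Jf (Qmat E pbar) s t x' a) *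
              (∑ y' : Fin K, Pbar E pbar (t+1) y y' * Jf (Qmat E pbar) s t y' a) := by
          refine Finset.sum_congr rfl fun s hs => Finset.sum_congr rfl fun a _ => ?_
          have hs' : s ≤ t := (Finset.mem_Icc.mp hs).2
          rw [Jf_step _ s t hs', Jf_step _ s t hs']
          rfl
        rw [e1, ← fubini4]
        have e2 : (1/(ᾱ * c 0)) * (c t * Vstar.trace) *
            (∑ x' : Fin K, ∑ y' : Fin K,
              Pbar E pbar (t+1) x x' * Pbar E pbar (t+1) y y' *
              (∑ s ∈ Finset.Icc 1 t, ∑ a ∈ MlInf E,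
                Jf (Qmat E pbar) s t x' a * Jf (Qmat E pbar) s t y' a))
            = ∑ x' : Fin K, ∑ y' : Fin K,
              Pbar E pbar (t+1) x x' * Pbar E pbar (t+1) y y' *
              ((1/(ᾱ * c 0)) * (c t * Vstar.trace) *
                (∑ s ∈ Finset.Icc 1 t, ∑ a ∈ MlInf E,
                  Jf (Qmat E pbar) s t x' a * Jf (Qmat E pbar) s t y' a)) := by
          rw [Finset.mul_sum]
          refine Finset.sum_congr rfl fun x' _ => ?_
          rw [Finset.mul_sum]
          exact Finset.sum_congr rfl fun y' _ => by ring
        rw [e2]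
        refine Finset.sum_le_sum fun x' _ => Finset.sum_le_sum fun y' _ => ?_
        exact mul_le_mul_of_nonneg_left (ih x' y')
          (mul_nonneg (hQ0 (t+1) (by omega) x x') (hQ0 (t+1) (by omega) y y'))
      have stepB : (1/(ᾱ * c 0)) * (c (t+1) * Vstar.trace) *
          (∑ a ∈ MlInf E,
            Jf (Qmat E pbar) (t+1) (t+1) x a * Jf (Qmat E pbar) (t+1) (t+1) y a)
          ≤ (if x ∈ Ml E ∧ y ∈ Ml E then
              q (t+1) x y / (wgt E pbar (t+1) x * wgt E pbar (t+1) y) * Vstar.trace else 0) := by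
        simp only [Jf_id]
        have hsum : ∑ a ∈ MlInf E, (if x = a then (1:ℝ) else 0) * (if y = a then 1 else 0)
            = if x = y ∧ x ∈ MlInf E then 1 else 0 := by
          by_cases hxy : x = y
          · subst hxy
            have h4 : ∀ a : Fin K, (if x = a then (1:ℝ) else 0) * (if x = a then 1 else 0)
                = if x = a then 1 else 0 := by intro a; split <;> simp
            rw [Finset.sum_congr rfl fun a _ => h4 a,
              Finset.sum_ite_eq (MlInf E) x fun _ => (1:ℝ)]
            simp
          · have h4 : ∀ a ∈ MlInf E,
                (if x = a then (1:ℝ) else 0) * (if y = a then 1 else 0) = 0 := by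
              intro a _
              by_cases h1 : x = a
              · by_cases h2 : y = a
                · exact absurd (h1.trans h2.symm) hxy
                · simp [h2]
              · simp [h1]
            rw [Finset.sum_congr rfl h4]
            simp [hxy]
        rw [hsum]
        by_cases hxs : x = y ∧ x ∈ MlInf E
        · obtain ⟨rfl, hxS⟩ := hxs
          rw [if_pos ⟨rfl, hxS⟩, mul_one]
          have hml : x ∈ Ml E := Finset.mem_of_mem_filter x hxS
          rw [if_pos ⟨hml, hml⟩]
          exact hW_diag (t+1) (by omega) x hml
        · rw [if_neg hxs, mul_zero]
          exact hW_nn (t+1) (by omega) x y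
      rw [Finset.sum_Icc_succ_top (by omega : 1 ≤ t+1)]
      refine hcombine _ _ _ _ ((1/(ᾱ * c 0)) * (c t * Vstar.trace)) _ (c (t+1)/c t)
        stepA stepB (div_nonneg (hc _).le (hc _).le) ?_
      have hcte : c t ≠ 0 := (hc t).ne'
      field_simp
  simp only [Mlc, Finset.mem_filter] at hμ
  obtain ⟨hml, hor⟩ := hμ
  have hpath : ∃ n, PathToS E n μ := by
    rcases hor with h | ⟨ν, hν, htg⟩
    · exact ⟨0, h⟩
    · have hTG : ∀ x : Fin K, Relation.TransGen (EdgeRel E) ν x → ∃ n, PathToS E n x := by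
        intro x htg'
        induction htg' with
        | single h => exact ⟨1, ν, hν, h⟩
        | tail h1 h2 ihx =>
          obtain ⟨n, hp⟩ := ihx
          exact ⟨n+1, _, hp, h2⟩
      exact hTG μ htg
  obtain ⟨n, hpn⟩ := hpath
  have hmass : ∀ s t : ℕ, s + n ≤ t →
      α ^ n ≤ ∑ a ∈ MlInf E, Jf (Qmat E pbar) s t μ a := by
    intro s t h
    refine Jf_mass_path (Qmat E pbar) (MlInf E) α hα0.le hQ0 hQS
      (fun m x => PathToS E m x) (fun x hx => hx) ?_ n μ hpn s t h
    intro m x hx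
    obtain ⟨ν', hp', he'⟩ := hx
    exact ⟨ν', hp', fun r hr => hQedge r hr x ν' he'⟩
  have hKpos : (0:ℝ) < (K:ℝ) := by exact_mod_cast hK
  have hsq : ∀ s t : ℕ, s + n ≤ t →
      (α^n)^2 / (K:ℝ) ≤ ∑ a ∈ MlInf E,
        Jf (Qmat E pbar) s t μ a * Jf (Qmat E pbar) s t μ a := by
    intro s t h
    have h1 := hmass s t h
    have hcs := Finset.sum_mul_sq_le_sq_mul_sq (MlInf E)
      (fun a => Jf (Qmat E pbar) s t μ a) (fun _ => (1:ℝ))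
    simp only [mul_one, one_pow, Finset.sum_const, nsmul_eq_mul] at hcs
    have hcard : ((MlInf E).card : ℝ) ≤ (K:ℝ) := by
      have hcd := Finset.card_le_univ (MlInf E)
      simp only [Finset.card_univ, Fintype.card_fin] at hcd
      exact_mod_cast hcd
    rw [div_le_iff₀ hKpos]
    have h2 : (α^n)^2 ≤ (∑ a ∈ MlInf E, Jf (Qmat E pbar) s t μ a)^2 :=
      pow_le_pow_left₀ (pow_nonneg hα0.le n) h1 2
    have hsqnn : (0:ℝ) ≤ ∑ a ∈ MlInf E, Jf (Qmat E pbar) s t μ a ^ 2 :=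
      Finset.sum_nonneg fun a _ => sq_nonneg _
    have h5 : ∑ a ∈ MlInf E, Jf (Qmat E pbar) s t μ a ^ 2
        = ∑ a ∈ MlInf E, Jf (Qmat E pbar) s t μ a * Jf (Qmat E pbar) s t μ a :=
      Finset.sum_congr rfl fun a _ => sq _
    nlinarith [h2, hcs, hcard, hsqnn, h5]
  have hlow : ∀ t : ℕ, n ≤ t →
      (1/(ᾱ * c 0)) * (α * c 0) * ((α^n)^2 / (K:ℝ)) * ((t:ℝ) - n)
        ≤ (∑ a : Fin d, Sig t (μ,a) (μ,a)) / Vstar.trace := by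
    intro t hnt
    have hGt := hG t μ μ
    rw [le_div_iff₀ hVtr]
    have hinn : ∀ s : ℕ, (0:ℝ) ≤ ∑ a ∈ MlInf E,
        Jf (Qmat E pbar) s t μ a * Jf (Qmat E pbar) s t μ a :=
      fun s => Finset.sum_nonneg fun a _ => mul_self_nonneg _
    have hSnn : (0:ℝ) ≤ ∑ s ∈ Finset.Icc 1 t, ∑ a ∈ MlInf E,
        Jf (Qmat E pbar) s t μ a * Jf (Qmat E pbar) s t μ a :=
      Finset.sum_nonneg fun s _ => hinn s
    have hS1 : ((t:ℝ) - n) * ((α^n)^2 / (K:ℝ)) ≤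
        ∑ s ∈ Finset.Icc 1 t, ∑ a ∈ MlInf E,
          Jf (Qmat E pbar) s t μ a * Jf (Qmat E pbar) s t μ a := by
      have hsub : Finset.Icc 1 (t-n) ⊆ Finset.Icc 1 t :=
        Finset.Icc_subset_Icc_right (by omega)
      calc ((t:ℝ) - n) * ((α^n)^2 / (K:ℝ))
          = ((t-n : ℕ):ℝ) * ((α^n)^2 / (K:ℝ)) := by rw [Nat.cast_sub hnt]
        _ = ∑ _s ∈ Finset.Icc 1 (t-n), ((α^n)^2 / (K:ℝ)) := by
            rw [Finset.sum_const, Nat.card_Icc, nsmul_eq_mul]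
            simp
        _ ≤ ∑ s ∈ Finset.Icc 1 (t-n), ∑ a ∈ MlInf E,
              Jf (Qmat E pbar) s t μ a * Jf (Qmat E pbar) s t μ a := by
            refine Finset.sum_le_sum fun s hs => hsq s t ?_
            have := Finset.mem_Icc.mp hs
            omega
        _ ≤ ∑ s ∈ Finset.Icc 1 t, ∑ a ∈ MlInf E,
              Jf (Qmat E pbar) s t μ a * Jf (Qmat E pbar) s t μ a :=
            Finset.sum_le_sum_of_subset_of_nonneg hsub (fun s _ _ => hinn s)
    have htn : (0:ℝ) ≤ (t:ℝ) - n := by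
      have h6 : (n:ℝ) ≤ t := by exact_mod_cast hnt
      linarith
    have hρ : (0:ℝ) ≤ (α^n)^2 / (K:ℝ) := by positivity
    calc (1/(ᾱ * c 0)) * (α * c 0) * ((α^n)^2 / (K:ℝ)) * ((t:ℝ) - n) * Vstar.trace
        = ((1/(ᾱ * c 0)) * Vstar.trace) * ((α * c 0) * (((t:ℝ) - n) * ((α^n)^2 / (K:ℝ)))) := by
          ring
      _ ≤ ((1/(ᾱ * c 0)) * Vstar.trace) * (c t *
            (∑ s ∈ Finset.Icc 1 t, ∑ a ∈ MlInf E,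
              Jf (Qmat E pbar) s t μ a * Jf (Qmat E pbar) s t μ a)) := by
          refine mul_le_mul_of_nonneg_left ?_ (by positivity)
          exact mul_le_mul (hclb t) hS1 (mul_nonneg htn hρ) (hc t).le
      _ = (1/(ᾱ * c 0)) * (c t * Vstar.trace) *
            (∑ s ∈ Finset.Icc 1 t, ∑ a ∈ MlInf E,
              Jf (Qmat E pbar) s t μ a * Jf (Qmat E pbar) s t μ a) := by ring
      _ ≤ _ := hGt
  have hCp : (0:ℝ) < (1/(ᾱ * c 0)) * (α * c 0) * ((α^n)^2 / (K:ℝ)) := by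
    have h7 : (0:ℝ) < (α^n)^2 := by positivity
    have h8 : (0:ℝ) < 1/(ᾱ * c 0) := by positivity
    positivity
  refine tendsto_atTop_mono'
    (f₁ := fun t : ℕ => (1/(ᾱ * c 0)) * (α * c 0) * ((α^n)^2 / (K:ℝ)) * ((t:ℝ) - n))
    atTop ?_ ?_
  · filter_upwards [eventually_ge_atTop n] with t ht using hlow t ht
  · have h1 : Tendsto (fun t : ℕ => (t:ℝ) + -(n:ℝ)) atTop atTop :=
      tendsto_atTop_add_const_right atTop _ tendsto_natCast_atTop_atTop
    have h2 := h1.const_mul_atTop hCp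
    exact h2.congr (fun t => by ring)
end

section
/- Under the asymptotic-covariance recursion of interactive M-estimation, every model that receives information only from stable sources does not collapse: for every μ ∈ M_l^nc, limsup_{t→∞} Tr(Σ_{t,μ,μ}) / Tr(V*) < ∞. (Here r_{t,μ} = Tr(Σ_{t,μ,μ}) is the asymptotic risk of the interactively trained M-estimator at node μ and r*_{t,μ} = Tr(V*) is the oracle asymptotic risk, so the asymptotic risk ratio r_{t,μ}/r*_{t,μ} remains bounded.) -/
open Matrix Finset Filter

namespace Stmt3Aux

noncomputable def aseq (β T c' : ℝ) : ℕ → ℝ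
  | 0 => 0
  | (k+1) => β * aseq β T c' k + (1-β)*T + c'

lemma aseq_mono {β T c' : ℝ} (hβ0 : 0 ≤ β) (hT : 0 ≤ T) (hβ1 : β ≤ 1) (hc' : 0 ≤ c') :
    Monotone (aseq β T c') := by
  apply monotone_nat_of_le_succ
  intro k
  induction k with
  | zero => simp only [aseq]; nlinarith
  | succ k ih =>
    simp only [aseq] at ih ⊢
    nlinarith [mul_le_mul_of_nonneg_left ih hβ0]

lemma aseq_nonneg {β T c' : ℝ} (hβ0 : 0 ≤ β) (hT : 0 ≤ T) (hβ1 : β ≤ 1) (hc' : 0 ≤ c')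
    (k : ℕ) : 0 ≤ aseq β T c' k := by
  have := aseq_mono hβ0 hT hβ1 hc' (Nat.zero_le k)
  simpa [aseq] using this

lemma aseq_le_aux {β T c' : ℝ} (hβ0 : 0 ≤ β) (hβ1 : β ≤ 1) (hT : 0 ≤ T) (hc' : 0 ≤ c') (k : ℕ) :
    aseq β T c' k ≤ (1 - β^k) * T + c' * k := by
  induction k with
  | zero => simp [aseq]
  | succ k ih =>
    simp only [aseq, pow_succ]
    push_cast
    nlinarith [mul_le_mul_of_nonneg_left ih hβ0, pow_nonneg hβ0 k,
      mul_nonneg hc' (Nat.cast_nonneg k : (0:ℝ) ≤ k),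
      mul_nonneg (mul_nonneg hc' (Nat.cast_nonneg k : (0:ℝ) ≤ k)) (sub_nonneg.mpr hβ1)]

/-- With `T = c'*(N+1)/β^(N+1)`, `aseq k ≤ T` for `k ≤ N`. -/
lemma aseq_le_T {β c' : ℝ} (hβ0 : 0 < β) (hβ1 : β ≤ 1) (hc' : 0 ≤ c') {N k : ℕ} (hk : k ≤ N) :
    aseq β (c' * (N+1) / β^(N+1)) c' k ≤ c' * (N+1) / β^(N+1) := by
  set T := c' * (N+1) / β^(N+1) with hTdef
  have hβk : (0:ℝ) < β^k := pow_pos hβ0 k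
  have hβN : (0:ℝ) < β^(N+1) := pow_pos hβ0 (N+1)
  have hT : 0 ≤ T := by positivity
  have h1 := aseq_le_aux (β := β) (T := T) hβ0.le hβ1 hT hc' k
  refine h1.trans ?_
  -- need (1 - β^k)*T + c'*k ≤ T, i.e. c'*k ≤ β^k * T
  have hpow : β^(N+1) ≤ β^k := pow_le_pow_of_le_one hβ0.le hβ1 (by omega)
  have key : c' * k ≤ β^k * T := by
    have : c' * k ≤ c' * (N+1) := by
      have : (k:ℝ) ≤ (N:ℝ)+1 := by exact_mod_cast Nat.le_succ_of_le hk
      nlinarith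
    calc c' * k ≤ c' * (N+1) := this
      _ = (c' * (N+1) / β^(N+1)) * β^(N+1) := by field_simp
      _ ≤ T * β^k := by
          apply mul_le_mul_of_nonneg_left hpow
          exact hT
      _ = β^k * T := mul_comm _ _
  nlinarith

def steps {K : ℕ} (E : Finset (Fin K × Fin K)) : ℕ → Fin K → Fin K → Prop
  | 0 => fun ν μ => ν = μ
  | (n+1) => fun ν μ => ∃ τ, steps E n ν τ ∧ EdgeRel E τ μ

lemma transGen_steps {K : ℕ} {E : Finset (Fin K × Fin K)} {ν μ : Fin K}
    (h : Relation.TransGen (EdgeRel E) ν μ) : ∃ n, steps E (n+1) ν μ := by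
  induction h with
  | single h => exact ⟨0, ν, rfl, h⟩
  | tail _ h ih => obtain ⟨n, hn⟩ := ih; exact ⟨n+1, _, hn, h⟩

open Classical in
noncomputable def ell {K : ℕ} (E : Finset (Fin K × Fin K)) (μ : Fin K) : ℕ :=
  if h : ∃ n, ∃ ν ∈ Mu E, steps E n ν μ then Nat.find h else 0

lemma ml_not_mu {K : ℕ} {E : Finset (Fin K × Fin K)} {μ : Fin K} (h : μ ∈ Ml E) :
    μ ∉ Mu E := by
  simp only [Ml, Mu, mem_filter, mem_univ, true_and] at *
  exact fun hc => h hc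

lemma mlnc_mem_ml {K : ℕ} {E : Finset (Fin K × Fin K)} {μ : Fin K} (h : μ ∈ Mlnc E) :
    μ ∈ Ml E := (Finset.mem_sdiff.mp h).1

lemma nin_closure {K : ℕ} {E : Finset (Fin K × Fin K)} {μ τ : Fin K}
    (hμ : μ ∈ Mlnc E) (hτ : τ ∈ Nin E μ) : τ ∈ Mu E ∨ τ ∈ Mlnc E := by
  classical
  by_cases hτu : τ ∈ Mu E
  · exact Or.inl hτu
  right
  have hτl : τ ∈ Ml E := by
    simp only [Ml, Mu, mem_filter, mem_univ, true_and] at hτu ⊢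
    exact hτu
  obtain ⟨hμl, hμnc⟩ := Finset.mem_sdiff.mp hμ
  refine Finset.mem_sdiff.mpr ⟨hτl, fun hτc => hμnc ?_⟩
  have hedge : EdgeRel E τ μ := by
    simpa [Nin, EdgeRel] using hτ
  simp only [Mlc, mem_filter] at hτc ⊢
  refine ⟨hμl, Or.inr ?_⟩
  rcases hτc.2 with h | ⟨ρ, hρ, hρτ⟩
  · exact ⟨τ, h, Relation.TransGen.single hedge⟩
  · exact ⟨ρ, hρ, hρτ.tail hedge⟩

lemma ell_spec {K : ℕ} {E : Finset (Fin K × Fin K)} {μ : Fin K} (hμ : μ ∈ Mlnc E) :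
    1 ≤ ell E μ ∧ ∃ τ ∈ Nin E μ, ell E τ ≤ ell E μ - 1 := by
  classical
  obtain ⟨hμl, hμnc⟩ := Finset.mem_sdiff.mp hμ
  have hμinf : μ ∉ MlInf E := by
    intro h
    exact hμnc (by simp only [Mlc, mem_filter]; exact ⟨hμl, Or.inl h⟩)
  have hex : ∃ n, ∃ ν ∈ Mu E, steps E n ν μ := by
    simp only [MlInf, mem_filter] at hμinf
    push_neg at hμinf
    obtain ⟨ν, hν, htg⟩ := hμinf hμl
    obtain ⟨n, hn⟩ := transGen_steps htg
    exact ⟨n+1, ν, hν, hn⟩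
  have hell : ell E μ = Nat.find hex := by simp [ell, hex]
  obtain ⟨ν, hν, hstep⟩ := Nat.find_spec hex
  have hpos : 1 ≤ Nat.find hex := by
    rcases Nat.eq_zero_or_pos (Nat.find hex) with h0 | h1
    · exfalso
      obtain ⟨ν', hν', hstep'⟩ := h0 ▸ Nat.find_spec hex
      cases hstep'
      exact ml_not_mu hμl hν'
    · exact h1
  obtain ⟨m, hm⟩ : ∃ m, Nat.find hex = m + 1 := ⟨Nat.find hex - 1, by omega⟩
  rw [hm] at hstep
  obtain ⟨τ, hsτ, hedge⟩ := hstep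
  have hτnin : τ ∈ Nin E μ := by simpa [Nin, EdgeRel] using hedge
  refine ⟨hell ▸ hpos, τ, hτnin, ?_⟩
  have hexτ : ∃ n, ∃ ν ∈ Mu E, steps E n ν τ := ⟨m, ν, hν, hsτ⟩
  have : ell E τ ≤ m := by
    rw [show ell E τ = Nat.find hexτ by simp [ell, hexτ]]
    exact Nat.find_le ⟨ν, hν, hsτ⟩
  omega

lemma kron_conj {K d : ℕ} (Q : Matrix (Fin K) (Fin K) ℝ)
    (M : Matrix (Fin K × Fin d) (Fin K × Fin d) ℝ) (μ ν : Fin K) (a b : Fin d) :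
    (kronId Q * M * (kronId Q)ᵀ : Matrix (Fin K × Fin d) (Fin K × Fin d) ℝ) (μ, a) (ν, b)
      = ∑ τ : Fin K, ∑ τ' : Fin K, Q μ τ * Q ν τ' * M (τ, a) (τ', b) := by
  simp only [Matrix.mul_apply, Matrix.transpose_apply, kronId, Matrix.of_apply,
    Fintype.sum_prod_type, mul_ite, ite_mul, one_mul, mul_one, mul_zero, zero_mul,
    Finset.sum_ite_eq, Finset.sum_ite_eq', Finset.mem_univ, if_true, Finset.sum_mul,
    Finset.mul_sum]
  rw [Finset.sum_comm]
  refine Finset.sum_congr rfl fun τ _ => Finset.sum_congr rfl fun τ' _ => by ring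

end Stmt3Aux


set_option maxHeartbeats 1000000 in
/-- Under the asymptotic-covariance recursion of interactive M-estimation, every
model receiving information only from stable sources does not collapse: for every
`μ ∈ M_l^nc`, `limsup_{t→∞} Tr(Σ_{t,μ,μ}) / Tr(V*) < ∞`, i.e. the risk-ratio sequence is
eventually bounded above. -/
theorem stmt3
    {K d : ℕ} (hK : 1 ≤ K) (hd : 1 ≤ d)
    (E : Finset (Fin K × Fin K))
    (α ᾱ : ℝ) (hα0 : 0 < α) (hα1 : α ≤ 1) (hᾱ : 1 ≤ ᾱ)
    (Mnature : Finset (Fin K)) (hMnat : Mnature ⊆ Mu E)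
    (Vstar : Matrix (Fin d) (Fin d) ℝ) (hVpsd : Vstar.PosSemidef) (hVtr : 0 < Vstar.trace)
    (c : ℕ → ℝ) (hc : ∀ t, 0 < c t)
    (hb : ∀ t s : ℕ, α ≤ c t / c s ∧ c t / c s ≤ ᾱ)
    (pbar : ℕ → Fin K → Fin K → ℝ)
    (hpbarα : ∀ t, 1 ≤ t → ∀ ν μ : Fin K, (ν, μ) ∈ E → α ≤ pbar t ν μ)
    (hpbarsum : ∀ t, 1 ≤ t → ∑ e ∈ E, pbar t e.1 e.2 ≤ 1)
    (p0 : Fin K → ℝ) (hp0α : ∀ μ ∉ Mnature, α ≤ p0 μ)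
    (hp0sum : ∑ μ ∈ Finset.univ \ Mnature, p0 μ ≤ 1)
    (q : ℕ → Fin K → Fin K → ℝ)
    (hqsymm : ∀ t, 1 ≤ t → ∀ ν₁ ∈ Ml E, ∀ ν₂ ∈ Ml E, q t ν₁ ν₂ = q t ν₂ ν₁)
    (hqnn : ∀ t, 1 ≤ t → ∀ ν₁ ∈ Ml E, ∀ ν₂ ∈ Ml E, 0 ≤ q t ν₁ ν₂)
    (hqle : ∀ t, 1 ≤ t → ∀ ν₁ ∈ Ml E, ∀ ν₂ ∈ Ml E,
      q t ν₁ ν₂ ≤ min (wgt E pbar t ν₁) (wgt E pbar t ν₂))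
    (hqdiag : ∀ t, 1 ≤ t → ∀ ν ∈ Ml E, q t ν ν = wgt E pbar t ν)
    (Sig : ℕ → Matrix (Fin K × Fin d) (Fin K × Fin d) ℝ)
    (hSig0 : Sig 0 = Sigma0 Mnature p0 Vstar)
    (hSigrec : ∀ t, 1 ≤ t → Sig t =
      (c t / c (t - 1)) • (kronId (Pbar E pbar t) * Sig (t - 1) * (kronId (Pbar E pbar t))ᵀ)
        + Vt E pbar q Vstar t) :
    ∀ μ ∈ Mlnc E,
      IsBoundedUnder (· ≤ ·) atTop
        (fun t : ℕ => (∑ a : Fin d, Sig t (μ, a) (μ, a)) / Vstar.trace) := by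
  classical
  intro μ0 hμ0
  set N : ℕ := Finset.univ.sup (Stmt3Aux.ell E) with hNdef
  have hellN : ∀ ρ : Fin K, Stmt3Aux.ell E ρ ≤ N := fun ρ => Finset.le_sup (Finset.mem_univ ρ)
  set β : ℝ := α ^ 2 with hβdef
  set c' : ℝ := 1 / α ^ 2 with hc'def
  set Nb : ℕ := 2 * N with hNbdef
  set T : ℝ := c' * (Nb + 1) / β ^ (Nb + 1) with hTdef
  set aa : ℕ → ℝ := Stmt3Aux.aseq β T c' with haadef
  have hβ0 : 0 < β := by rw [hβdef]; positivity
  have hβ1 : β ≤ 1 := by rw [hβdef]; nlinarith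
  have hc'0 : 0 ≤ c' := by rw [hc'def]; positivity
  have hT0 : 0 ≤ T := by rw [hTdef]; positivity
  have haa_mono : Monotone aa := by
    rw [haadef]; exact Stmt3Aux.aseq_mono hβ0.le hT0 hβ1 hc'0
  have haa_nn : ∀ k, 0 ≤ aa k := by
    rw [haadef]; exact Stmt3Aux.aseq_nonneg hβ0.le hT0 hβ1 hc'0
  have haaT : ∀ k, k ≤ Nb → aa k ≤ T := by
    intro k hk
    rw [haadef, hTdef]
    exact Stmt3Aux.aseq_le_T hβ0 hβ1 hc'0 hk
  set G : Fin K → Fin K → ℝ :=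
    fun x y => 1 / α + aa (Stmt3Aux.ell E x + Stmt3Aux.ell E y) with hGdef
  have hGxy : ∀ x y, G x y = 1 / α + aa (Stmt3Aux.ell E x + Stmt3Aux.ell E y) :=
    fun x y => by rw [hGdef]
  have hG_nn : ∀ x y, 0 ≤ G x y := by
    intro x y
    rw [hGxy]
    have h1 := haa_nn (Stmt3Aux.ell E x + Stmt3Aux.ell E y)
    have h2 : (0:ℝ) ≤ 1 / α := by positivity
    linarith
  have hG_le : ∀ x y, G x y ≤ 1 / α + T := by
    intro x y
    rw [hGxy]
    have h1 : Stmt3Aux.ell E x + Stmt3Aux.ell E y ≤ Nb := by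
      have := hellN x; have := hellN y; omega
    linarith [haaT _ h1]
  set Vmax : ℝ := ∑ i : Fin d, ∑ j : Fin d, |Vstar i j| with hVmdef
  have hVm0 : 0 ≤ Vmax := by
    rw [hVmdef]
    exact Finset.sum_nonneg fun i _ => Finset.sum_nonneg fun j _ => abs_nonneg _
  have hVm : ∀ i j : Fin d, |Vstar i j| ≤ Vmax := by
    intro i j
    rw [hVmdef]
    have h1 : |Vstar i j| ≤ ∑ j' : Fin d, |Vstar i j'| :=
      Finset.single_le_sum (f := fun j' => |Vstar i j'|) (fun _ _ => abs_nonneg _)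
        (Finset.mem_univ j)
    refine h1.trans ?_
    exact Finset.single_le_sum (f := fun i' => ∑ j' : Fin d, |Vstar i' j'|)
      (fun i' _ => Finset.sum_nonneg fun j' _ => abs_nonneg _) (Finset.mem_univ i)
  -- basic facts about the graph / matrices
  have hmemNin : ∀ (m ρ : Fin K), m ∈ Nin E ρ ↔ (m, ρ) ∈ E := by
    intro m ρ; simp [Nin]
  have hMuMl : ∀ ρ : Fin K, ρ ∈ Mu E → ρ ∉ Ml E := fun ρ h hl => Stmt3Aux.ml_not_mu hl h
  have hwle1 : ∀ t, 1 ≤ t → ∀ ρ : Fin K, wgt E pbar t ρ ≤ 1 := by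
    intro t ht ρ
    have hemb : Function.Injective (fun m : Fin K => (m, ρ)) := by
      intro a b h; simpa using h
    have hsub : (Nin E ρ).map ⟨fun m => (m, ρ), hemb⟩ ⊆ E := by
      intro e he
      simp only [Finset.mem_map, Function.Embedding.coeFn_mk] at he
      obtain ⟨m, hm, rfl⟩ := he
      exact (hmemNin m ρ).mp hm
    have h1 : wgt E pbar t ρ = ∑ e ∈ (Nin E ρ).map ⟨fun m => (m, ρ), hemb⟩, pbar t e.1 e.2 := by
      rw [Finset.sum_map]; rfl
    rw [h1]
    refine le_trans (Finset.sum_le_sum_of_subset_of_nonneg hsub ?_) (hpbarsum t ht)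
    intro e he _
    exact le_trans hα0.le (hpbarα t ht e.1 e.2 he)
  have hwα : ∀ t, 1 ≤ t → ∀ ρ ∈ Ml E, α ≤ wgt E pbar t ρ := by
    intro t ht ρ hρ
    have hne : (Nin E ρ).Nonempty := by
      simp only [Ml, Finset.mem_filter] at hρ
      exact Finset.nonempty_iff_ne_empty.mpr hρ.2
    obtain ⟨m, hm⟩ := hne
    refine le_trans (hpbarα t ht m ρ ((hmemNin m ρ).mp hm)) ?_
    exact Finset.single_le_sum
      (fun m' hm' => le_trans hα0.le (hpbarα t ht m' ρ ((hmemNin m' ρ).mp hm'))) hm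
  have hw0 : ∀ t, 1 ≤ t → ∀ ρ ∈ Ml E, 0 < wgt E pbar t ρ :=
    fun t ht ρ hρ => lt_of_lt_of_le hα0 (hwα t ht ρ hρ)
  have hPnn : ∀ t, 1 ≤ t → ∀ ρ τ : Fin K, 0 ≤ Pbar E pbar t ρ τ := by
    intro t ht ρ τ
    simp only [Pbar, Matrix.of_apply]
    split_ifs with h1 h2
    · exact div_nonneg (le_trans hα0.le (hpbarα t ht τ ρ ((hmemNin τ ρ).mp h2)))
        (hw0 t ht ρ h1).le
    · exact le_refl 0
    · exact zero_le_one
    · exact le_refl 0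
  have hPmu : ∀ t (ρ : Fin K), ρ ∈ Mu E → ∀ τ, Pbar E pbar t ρ τ = if ρ = τ then 1 else 0 := by
    intro t ρ hρ τ
    simp only [Pbar, Matrix.of_apply, if_neg (hMuMl ρ hρ)]
  have hProw : ∀ t, 1 ≤ t → ∀ ρ : Fin K, ∑ τ : Fin K, Pbar E pbar t ρ τ = 1 := by
    intro t ht ρ
    by_cases hρ : ρ ∈ Ml E
    · simp only [Pbar, Matrix.of_apply, if_pos hρ]
      rw [Finset.sum_ite_mem, Finset.univ_inter, ← Finset.sum_div]
      exact div_self (hw0 t ht ρ hρ).ne'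
    · simp only [Pbar, Matrix.of_apply, if_neg hρ]
      simp
  have hPge : ∀ t, 1 ≤ t → ∀ ρ ∈ Ml E, ∀ τ ∈ Nin E ρ, α ≤ Pbar E pbar t ρ τ := by
    intro t ht ρ hρ τ hτ
    simp only [Pbar, Matrix.of_apply, if_pos hρ, if_pos hτ]
    rw [le_div_iff₀ (hw0 t ht ρ hρ)]
    calc α * wgt E pbar t ρ ≤ α * 1 :=
          mul_le_mul_of_nonneg_left (hwle1 t ht ρ) hα0.le
      _ = α := mul_one α
      _ ≤ pbar t τ ρ := hpbarα t ht τ ρ ((hmemNin τ ρ).mp hτ)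
  set Gd : Finset (Fin K) := Mlnc E ∪ Mu E with hGddef
  have hGdμ0 : μ0 ∈ Gd := by rw [hGddef]; exact Finset.mem_union_left _ hμ0
  have hGdcases : ∀ ρ, ρ ∈ Gd → ρ ∈ Mlnc E ∨ ρ ∈ Mu E := by
    intro ρ hρ; rw [hGddef] at hρ; exact Finset.mem_union.mp hρ
  have hGdl : ∀ ρ, ρ ∈ Mlnc E → ρ ∈ Gd := by
    intro ρ hρ; rw [hGddef]; exact Finset.mem_union_left _ hρ
  have hGdr : ∀ ρ, ρ ∈ Mu E → ρ ∈ Gd := by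
    intro ρ hρ; rw [hGddef]; exact Finset.mem_union_right _ hρ
  have hPsupp : ∀ t, 1 ≤ t → ∀ ρ ∈ Gd, ∀ τ : Fin K, Pbar E pbar t ρ τ ≠ 0 → τ ∈ Gd := by
    intro t ht ρ hρ τ hne
    by_cases hρl : ρ ∈ Ml E
    · have hτn : τ ∈ Nin E ρ := by
        by_contra h
        exact hne (by simp [Pbar, hρl, h])
      have hρnc : ρ ∈ Mlnc E := by
        rcases hGdcases ρ hρ with h | h
        · exact h
        · exact absurd hρl (hMuMl ρ h)
      rcases Stmt3Aux.nin_closure hρnc hτn with h | h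
      · exact hGdr τ h
      · exact hGdl τ h
    · have : ρ = τ := by
        by_contra h
        exact hne (by simp [Pbar, hρl, h])
      exact this ▸ hρ
  -- weighted average bound
  have havg : ∀ (w f : Fin K × Fin K → ℝ) (i0 : Fin K × Fin K) (A : ℝ),
      (∀ i, 0 ≤ w i) → (∑ i : Fin K × Fin K, w i = 1) → (∀ i, f i ≤ T) →
      β ≤ w i0 → f i0 ≤ A → A ≤ T →
      ∑ i : Fin K × Fin K, w i * f i ≤ β * A + (1 - β) * T := by
    intro w f i0 A hwnn hw1 hfT hwi0 hfA hAT
    have hsplit : ∑ i : Fin K × Fin K, w i * f i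
        = w i0 * f i0 + ∑ i ∈ Finset.univ.erase i0, w i * f i :=
      (Finset.add_sum_erase _ _ (Finset.mem_univ i0)).symm
    have h1 : ∑ i ∈ Finset.univ.erase i0, w i * f i
        ≤ (∑ i ∈ Finset.univ.erase i0, w i) * T := by
      rw [Finset.sum_mul]
      exact Finset.sum_le_sum fun i _ => mul_le_mul_of_nonneg_left (hfT i) (hwnn i)
    have h2 : ∑ i ∈ Finset.univ.erase i0, w i = 1 - w i0 := by
      rw [Finset.sum_erase_eq_sub (Finset.mem_univ i0), hw1]
    have h3 : w i0 * f i0 ≤ w i0 * A := mul_le_mul_of_nonneg_left hfA (hwnn i0)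
    have hwle : w i0 ≤ 1 := by
      have h4 : 0 ≤ ∑ i ∈ Finset.univ.erase i0, w i :=
        Finset.sum_nonneg fun i _ => hwnn i
      rw [h2] at h4; linarith
    rw [hsplit]
    rw [h2] at h1
    nlinarith
  -- per-coordinate descent
  have hcoord : ∀ t, 1 ≤ t → ∀ x ∈ Gd, ∃ τ, α ≤ Pbar E pbar t x τ ∧
      Stmt3Aux.ell E τ ≤ Stmt3Aux.ell E x ∧
      (x ∈ Mlnc E → Stmt3Aux.ell E τ + 1 ≤ Stmt3Aux.ell E x) := by
    intro t ht x hx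
    rcases hGdcases x hx with hxnc | hxu
    · obtain ⟨hx1, τ, hτn, hℓτ⟩ := Stmt3Aux.ell_spec hxnc
      exact ⟨τ, hPge t ht x (Stmt3Aux.mlnc_mem_ml hxnc) τ hτn, by omega, fun _ => by omega⟩
    · refine ⟨x, ?_, le_refl _, fun hxnc => ?_⟩
      · rw [hPmu t x hxu x, if_pos rfl]; exact hα1
      · exact absurd (Stmt3Aux.mlnc_mem_ml hxnc) (hMuMl x hxu)
  -- the key combinatorial inequality
  have key : ∀ t, 1 ≤ t → ∀ x ∈ Gd, ∀ y ∈ Gd,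
      (∑ τ : Fin K, ∑ τ' : Fin K, Pbar E pbar t x τ * Pbar E pbar t y τ' * G τ τ')
        + (if x ∈ Ml E ∧ y ∈ Ml E then c' else 0) ≤ G x y := by
    intro t ht x hx y hy
    have hps : (∑ τ : Fin K, ∑ τ' : Fin K, Pbar E pbar t x τ * Pbar E pbar t y τ' * G τ τ')
        = ∑ i : Fin K × Fin K, Pbar E pbar t x i.1 * Pbar E pbar t y i.2 * G i.1 i.2 :=
      (Fintype.sum_prod_type
        (f := fun i : Fin K × Fin K =>
          Pbar E pbar t x i.1 * Pbar E pbar t y i.2 * G i.1 i.2)).symm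
    have hw1 : ∑ i : Fin K × Fin K, Pbar E pbar t x i.1 * Pbar E pbar t y i.2 = 1 := by
      have e : ∑ i : Fin K × Fin K, Pbar E pbar t x i.1 * Pbar E pbar t y i.2
          = ∑ a : Fin K, ∑ b : Fin K, Pbar E pbar t x a * Pbar E pbar t y b :=
        Fintype.sum_prod_type
          (f := fun i : Fin K × Fin K => Pbar E pbar t x i.1 * Pbar E pbar t y i.2)
      rw [e, ← Finset.sum_mul_sum, hProw t ht x, hProw t ht y, mul_one]
    by_cases hS : x ∈ Mlnc E ∨ y ∈ Mlnc E
    · obtain ⟨τx, hPx, hℓxle, hℓxdec⟩ := hcoord t ht x hx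
      obtain ⟨τy, hPy, hℓyle, hℓydec⟩ := hcoord t ht y hy
      have hk1 : 1 ≤ Stmt3Aux.ell E x + Stmt3Aux.ell E y := by
        rcases hS with h | h
        · obtain ⟨h1, -⟩ := Stmt3Aux.ell_spec h; omega
        · obtain ⟨h1, -⟩ := Stmt3Aux.ell_spec h; omega
      have hidx : Stmt3Aux.ell E τx + Stmt3Aux.ell E τy + 1
          ≤ Stmt3Aux.ell E x + Stmt3Aux.ell E y := by
        rcases hS with h | h
        · have := hℓxdec h; omega
        · have := hℓydec h; omega
      obtain ⟨m, hm⟩ : ∃ m, Stmt3Aux.ell E x + Stmt3Aux.ell E y = m + 1 :=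
        ⟨Stmt3Aux.ell E x + Stmt3Aux.ell E y - 1, by omega⟩
      have hsum : ∑ i : Fin K × Fin K,
          Pbar E pbar t x i.1 * Pbar E pbar t y i.2 * aa (Stmt3Aux.ell E i.1 + Stmt3Aux.ell E i.2)
          ≤ β * aa m + (1 - β) * T := by
        refine havg _ _ (τx, τy) (aa m)
          (fun i => mul_nonneg (hPnn t ht x i.1) (hPnn t ht y i.2))
          hw1 (fun i => haaT _ ?_) ?_ ?_ (haaT m ?_)
        · have := hellN i.1; have := hellN i.2; omega
        · have h0 : (0:ℝ) ≤ Pbar E pbar t x τx := le_trans hα0.le hPx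
          rw [hβdef]
          nlinarith
        · exact haa_mono (show Stmt3Aux.ell E τx + Stmt3Aux.ell E τy ≤ m by omega)
        · have := hellN x; have := hellN y; omega
      have hsplit : ∑ i : Fin K × Fin K,
          Pbar E pbar t x i.1 * Pbar E pbar t y i.2 * G i.1 i.2
          = 1 / α + ∑ i : Fin K × Fin K, Pbar E pbar t x i.1 * Pbar E pbar t y i.2
              * aa (Stmt3Aux.ell E i.1 + Stmt3Aux.ell E i.2) := by
        simp only [hGdef, mul_add]
        rw [Finset.sum_add_distrib, ← Finset.sum_mul, hw1, one_mul]
      have haek : aa (Stmt3Aux.ell E x + Stmt3Aux.ell E y) = β * aa m + (1 - β) * T + c' := by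
        rw [hm, haadef]; rfl
      have hite : (if x ∈ Ml E ∧ y ∈ Ml E then c' else 0) ≤ c' := by
        split_ifs
        · exact le_refl _
        · exact hc'0
      rw [hps, hsplit, hGxy x y, haek]
      linarith
    · push_neg at hS
      have hxu : x ∈ Mu E := by
        rcases hGdcases x hx with h | h
        · exact absurd h hS.1
        · exact h
      have hyu : y ∈ Mu E := by
        rcases hGdcases y hy with h | h
        · exact absurd h hS.2
        · exact h
      have hxml : x ∉ Ml E := hMuMl x hxu
      have heq : (∑ τ : Fin K, ∑ τ' : Fin K,
          Pbar E pbar t x τ * Pbar E pbar t y τ' * G τ τ') = G x y := by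
        have e1 : ∀ τ, Pbar E pbar t x τ = if x = τ then 1 else 0 := hPmu t x hxu
        have e2 : ∀ τ, Pbar E pbar t y τ = if y = τ then 1 else 0 := hPmu t y hyu
        simp only [e1, e2, ite_mul, mul_ite, one_mul, zero_mul, mul_zero, mul_one,
          Finset.sum_ite_eq, Finset.mem_univ, if_true]
      rw [heq, if_neg (by tauto)]
      simp
  -- entrywise bound on Vt
  have hVtbd : ∀ t, 1 ≤ t → ∀ (x y : Fin K) (i j : Fin d),
      |Vt E pbar q Vstar t (x, i) (y, j)|
        ≤ (if x ∈ Ml E ∧ y ∈ Ml E then (1 / α) * Vmax else 0) := by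
    intro t ht x y i j
    simp only [Vt, Matrix.of_apply]
    split_ifs with h
    · obtain ⟨hxl, hyl⟩ := h
      rw [abs_mul]
      have hwx := hwα t ht x hxl
      have hwy := hwα t ht y hyl
      have hq0 := hqnn t ht x hxl y hyl
      have hql := hqle t ht x hxl y hyl
      have hrat : |q t x y / (wgt E pbar t x * wgt E pbar t y)| ≤ 1 / α := by
        rw [abs_of_nonneg (div_nonneg hq0 (by nlinarith))]
        rw [div_le_div_iff₀ (by nlinarith) hα0]
        have hqwx : q t x y ≤ wgt E pbar t x := hql.trans (min_le_left _ _)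
        nlinarith [mul_nonneg (sub_nonneg.mpr hqwx) hα0.le,
          mul_nonneg (le_trans hα0.le hwx) (sub_nonneg.mpr hwy)]
      exact mul_le_mul hrat (hVm i j) (abs_nonneg _) (by positivity)
    · simp
  -- the main inductive entrywise bound
  have main : ∀ t, ∀ x ∈ Gd, ∀ y ∈ Gd, ∀ (i j : Fin d),
      |Sig t (x, i) (y, j)| ≤ (c t / c 0) * (Vmax * G x y) := by
    intro t
    induction t with
    | zero =>
      intro x hx y hy i j
      rw [hSig0, div_self (hc 0).ne', one_mul]
      simp only [Sigma0, Matrix.of_apply]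
      split_ifs with h
      · obtain ⟨hxy, hxn⟩ := h
        rw [abs_mul]
        have hp0 : α ≤ p0 x := hp0α x hxn
        have hp0pos : 0 < p0 x := lt_of_lt_of_le hα0 hp0
        have h1 : |1 / p0 x| ≤ 1 / α := by
          rw [abs_of_nonneg (one_div_nonneg.mpr hp0pos.le)]
          exact one_div_le_one_div_of_le hα0 hp0
        have h2 : |1 / p0 x| * |Vstar i j| ≤ (1 / α) * Vmax :=
          mul_le_mul h1 (hVm i j) (abs_nonneg _) (by positivity)
        refine h2.trans ?_
        have h3 : Vmax * (1 / α) ≤ Vmax * G x y := by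
          refine mul_le_mul_of_nonneg_left ?_ hVm0
          rw [hGxy]
          linarith [haa_nn (Stmt3Aux.ell E x + Stmt3Aux.ell E y)]
        linarith [mul_comm Vmax (1 / α)]
      · rw [abs_zero]
        exact mul_nonneg hVm0 (hG_nn x y)
    | succ s ih =>
      intro x hx y hy i j
      have ht1 : 1 ≤ s + 1 := Nat.le_add_left 1 s
      rw [hSigrec (s + 1) ht1]
      simp only [Nat.add_sub_cancel, Matrix.add_apply, Matrix.smul_apply, smul_eq_mul]
      rw [Stmt3Aux.kron_conj]
      have hcc : 0 < c (s + 1) / c s := div_pos (hc _) (hc _)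
      refine (abs_add_le _ _).trans ?_
      rw [abs_mul, abs_of_pos hcc]
      have hpt : ∀ τ τ' : Fin K,
          Pbar E pbar (s+1) x τ * Pbar E pbar (s+1) y τ' * |Sig s (τ, i) (τ', j)|
          ≤ Pbar E pbar (s+1) x τ * Pbar E pbar (s+1) y τ' * ((c s / c 0) * (Vmax * G τ τ')) := by
        intro τ τ'
        by_cases h1 : Pbar E pbar (s+1) x τ = 0
        · simp [h1]
        by_cases h2 : Pbar E pbar (s+1) y τ' = 0
        · simp [h2]
        have hτ : τ ∈ Gd := hPsupp (s + 1) ht1 x hx τ h1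
        have hτ' : τ' ∈ Gd := hPsupp (s + 1) ht1 y hy τ' h2
        exact mul_le_mul_of_nonneg_left (ih τ hτ τ' hτ' i j)
          (mul_nonneg (hPnn _ ht1 x τ) (hPnn _ ht1 y τ'))
      have habs : |∑ τ : Fin K, ∑ τ' : Fin K,
            Pbar E pbar (s+1) x τ * Pbar E pbar (s+1) y τ' * Sig s (τ, i) (τ', j)|
          ≤ ∑ τ : Fin K, ∑ τ' : Fin K,
            Pbar E pbar (s+1) x τ * Pbar E pbar (s+1) y τ' * |Sig s (τ, i) (τ', j)| := by
        refine (Finset.abs_sum_le_sum_abs _ _).trans ?_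
        refine Finset.sum_le_sum fun τ _ => ?_
        refine (Finset.abs_sum_le_sum_abs _ _).trans ?_
        refine Finset.sum_le_sum fun τ' _ => ?_
        rw [abs_mul, abs_of_nonneg (mul_nonneg (hPnn _ ht1 x τ) (hPnn _ ht1 y τ'))]
      have hsum2 : ∑ τ : Fin K, ∑ τ' : Fin K,
            Pbar E pbar (s+1) x τ * Pbar E pbar (s+1) y τ' * ((c s / c 0) * (Vmax * G τ τ'))
          = (c s / c 0) * Vmax * (∑ τ : Fin K, ∑ τ' : Fin K,
            Pbar E pbar (s+1) x τ * Pbar E pbar (s+1) y τ' * G τ τ') := by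
        rw [Finset.mul_sum]
        refine Finset.sum_congr rfl fun τ _ => ?_
        rw [Finset.mul_sum]
        exact Finset.sum_congr rfl fun τ' _ => by ring
      have hstep1 : c (s + 1) / c s
            * |∑ τ : Fin K, ∑ τ' : Fin K,
                Pbar E pbar (s+1) x τ * Pbar E pbar (s+1) y τ' * Sig s (τ, i) (τ', j)|
          ≤ c (s + 1) / c 0 * Vmax
            * (∑ τ : Fin K, ∑ τ' : Fin K,
                Pbar E pbar (s+1) x τ * Pbar E pbar (s+1) y τ' * G τ τ') := by
        have h1 : |∑ τ : Fin K, ∑ τ' : Fin K,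
              Pbar E pbar (s+1) x τ * Pbar E pbar (s+1) y τ' * Sig s (τ, i) (τ', j)|
            ≤ (c s / c 0) * Vmax * (∑ τ : Fin K, ∑ τ' : Fin K,
              Pbar E pbar (s+1) x τ * Pbar E pbar (s+1) y τ' * G τ τ') := by
          refine habs.trans ?_
          rw [← hsum2]
          exact Finset.sum_le_sum fun τ _ => Finset.sum_le_sum fun τ' _ => hpt τ τ'
        have h2 := mul_le_mul_of_nonneg_left h1 hcc.le
        refine h2.trans_eq ?_
        have hmid : c (s + 1) / c s * (c s / c 0) = c (s + 1) / c 0 := by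
          rw [div_mul_div_comm, mul_comm (c s) (c 0), mul_div_mul_right _ _ (hc s).ne']
        calc c (s + 1) / c s * (c s / c 0 * Vmax * (∑ τ : Fin K, ∑ τ' : Fin K,
              Pbar E pbar (s+1) x τ * Pbar E pbar (s+1) y τ' * G τ τ'))
            = (c (s + 1) / c s * (c s / c 0)) * Vmax * (∑ τ : Fin K, ∑ τ' : Fin K,
              Pbar E pbar (s+1) x τ * Pbar E pbar (s+1) y τ' * G τ τ') := by ring
          _ = c (s + 1) / c 0 * Vmax * (∑ τ : Fin K, ∑ τ' : Fin K,
              Pbar E pbar (s+1) x τ * Pbar E pbar (s+1) y τ' * G τ τ') := by rw [hmid]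
      have hstep2 : |Vt E pbar q Vstar (s + 1) (x, i) (y, j)|
          ≤ c (s + 1) / c 0 * Vmax * (if x ∈ Ml E ∧ y ∈ Ml E then c' else 0) := by
        refine (hVtbd (s + 1) ht1 x y i j).trans ?_
        have hαc : α ≤ c (s + 1) / c 0 := (hb (s + 1) 0).1
        split_ifs
        · rw [hc'def]
          have hα2 : (0:ℝ) < α ^ 2 := by positivity
          have hkey1 : 1 / α * Vmax * α ^ 2 ≤ c (s + 1) / c 0 * Vmax := by
            have h1 : 1 / α * Vmax * α ^ 2 = α * Vmax := by field_simp
            rw [h1]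
            nlinarith
          calc 1 / α * Vmax = (1 / α * Vmax * α ^ 2) * (1 / α ^ 2) := by field_simp
            _ ≤ c (s + 1) / c 0 * Vmax * (1 / α ^ 2) :=
                mul_le_mul_of_nonneg_right hkey1 (by positivity)
        · simp
      refine (add_le_add hstep1 hstep2).trans ?_
      have hkey := key (s + 1) ht1 x hx y hy
      have hnn : 0 ≤ c (s + 1) / c 0 * Vmax :=
        mul_nonneg (div_pos (hc _) (hc _)).le hVm0
      calc c (s + 1) / c 0 * Vmax * (∑ τ : Fin K, ∑ τ' : Fin K,
              Pbar E pbar (s+1) x τ * Pbar E pbar (s+1) y τ' * G τ τ')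
            + c (s + 1) / c 0 * Vmax * (if x ∈ Ml E ∧ y ∈ Ml E then c' else 0)
          = c (s + 1) / c 0 * Vmax
            * ((∑ τ : Fin K, ∑ τ' : Fin K,
                Pbar E pbar (s+1) x τ * Pbar E pbar (s+1) y τ' * G τ τ')
              + (if x ∈ Ml E ∧ y ∈ Ml E then c' else 0)) := by ring
        _ ≤ c (s + 1) / c 0 * Vmax * G x y := mul_le_mul_of_nonneg_left hkey hnn
        _ = c (s + 1) / c 0 * (Vmax * G x y) := by ring
  -- conclude
  refine isBoundedUnder_of ⟨(d * (ᾱ * (Vmax * (1 / α + T)))) / Vstar.trace, fun t => ?_⟩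
  have hnum : (∑ a : Fin d, Sig t (μ0, a) (μ0, a)) ≤ d * (ᾱ * (Vmax * (1 / α + T))) := by
    have h1 : ∀ a : Fin d, Sig t (μ0, a) (μ0, a) ≤ ᾱ * (Vmax * (1 / α + T)) := by
      intro a
      refine (le_abs_self _).trans ((main t μ0 hGdμ0 μ0 hGdμ0 a a).trans ?_)
      have hble : c t / c 0 ≤ ᾱ := (hb t 0).2
      have hg : Vmax * G μ0 μ0 ≤ Vmax * (1 / α + T) :=
        mul_le_mul_of_nonneg_left (hG_le μ0 μ0) hVm0
      have h0 : 0 ≤ Vmax * G μ0 μ0 := mul_nonneg hVm0 (hG_nn μ0 μ0)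
      have hcpos : 0 < c t / c 0 := div_pos (hc t) (hc 0)
      have hx1 : 0 ≤ (ᾱ - c t / c 0) * (Vmax * G μ0 μ0) :=
        mul_nonneg (sub_nonneg.mpr hble) h0
      have hx2 : 0 ≤ ᾱ * (Vmax * (1 / α + T) - Vmax * G μ0 μ0) :=
        mul_nonneg (le_trans zero_le_one hᾱ) (sub_nonneg.mpr hg)
      nlinarith
    calc (∑ a : Fin d, Sig t (μ0, a) (μ0, a))
        ≤ ∑ _a : Fin d, ᾱ * (Vmax * (1 / α + T)) := Finset.sum_le_sum fun a _ => h1 a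
      _ = d * (ᾱ * (Vmax * (1 / α + T))) := by
          rw [Finset.sum_const, Finset.card_univ, Fintype.card_fin, nsmul_eq_mul]
  gcongr
end

section
/- Assume M_nature = ∅ (so p̄_{0,μ} is given for every μ ∈ M and Σ_{0,μ,μ} = (1/p̄_{0,μ}) V* for all μ ∈ M). Then for every μ ∈ M_l and every integer T ≥ 1, the following lower bound holds in the positive semidefinite order: Σ_{T,μ,μ} ⪰ ( ∑_{t=1}^{T} b_{T,t} (∑_{ν∈M_l} J̄_{T,t+1,μ,ν})² / (∑_{ν∈M_l} w_{t,ν}) + b_{T,0} / (∑_{ν∈M} p̄_{0,ν}) ) · V*. -/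
open Matrix Finset Filter

/-!
Every block of `Σ_t` is a multiple of `V*`: `Σ_t = S_t ⊗ V*` for the scalar recursion
`S_t = b_{t,t-1} P̄_t S_{t-1} P̄_tᵀ + Q_t`, which unrolls to
`S_T = b_{T,0} J̄_{T,1} S_0 J̄_{T,1}ᵀ + ∑_t b_{T,t} J̄_{T,t+1} Q_t J̄_{T,t+1}ᵀ`.
The `(μ, μ)` entry of each term is a quadratic form in the nonnegative row `x = J̄_{T,t+1}(μ, ·)`.
Since `Q_t` and `S_0` have nonnegative entries and diagonals `1/w_{t,ν}` and `1/p̄_{0,ν}`, such a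
form is at least `∑ x_ν² / w_ν ≥ (∑ x_ν)² / ∑ w_ν` (Cauchy–Schwarz in Sedrakyan's form), and the
rows of `J̄_{T,1}` sum to `1` because row-stochastic matrices form a monoid.
-/

open scoped Kronecker

namespace Matrix

variable {ι : Type*} [Fintype ι]

theorem sq_sum_div_le_dotProduct_mulVec (s : Finset ι) {A : Matrix ι ι ℝ} {w x : ι → ℝ}
    (hA : ∀ i j, 0 ≤ A i j) (hw : ∀ i ∈ s, 0 < w i) (hdiag : ∀ i ∈ s, A i i = (w i)⁻¹)
    (hx : ∀ i, 0 ≤ x i) :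
    (∑ i ∈ s, x i) ^ 2 / ∑ i ∈ s, w i ≤ x ⬝ᵥ A *ᵥ x := by
  have hterm : ∀ i j, 0 ≤ x i * A i j * x j := fun i j =>
    mul_nonneg (mul_nonneg (hx i) (hA i j)) (hx j)
  calc (∑ i ∈ s, x i) ^ 2 / ∑ i ∈ s, w i
      ≤ ∑ i ∈ s, x i ^ 2 / w i := Finset.sq_sum_div_le_sum_sq_div s x hw
    _ = ∑ i ∈ s, x i * A i i * x i :=
        Finset.sum_congr rfl fun i hi => by rw [hdiag i hi]; ring
    _ ≤ ∑ i, x i * A i i * x i :=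
        Finset.sum_le_sum_of_subset_of_nonneg (Finset.subset_univ s) fun i _ _ => hterm i i
    _ ≤ ∑ i, ∑ j, x i * A i j * x j :=
        Finset.sum_le_sum fun i _ =>
          Finset.single_le_sum (f := fun j => x i * A i j * x j) (fun j _ => hterm i j)
            (Finset.mem_univ i)
    _ = x ⬝ᵥ A *ᵥ x := by
        simp only [dotProduct, mulVec, Finset.mul_sum, mul_assoc]

theorem mul_mul_transpose_apply_self {R : Type*} [CommSemiring R] (A M : Matrix ι ι R) (i : ι) :
    (A * M * Aᵀ) i i = A i ⬝ᵥ M *ᵥ A i := by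
  rw [mul_apply', dotProduct_mulVec]
  rfl

end Matrix

section Jmat

variable {K : ℕ}

theorem Jmat_self (P : ℕ → Matrix (Fin K) (Fin K) ℝ) (t : ℕ) : Jmat P t (t + 1) = 1 := by
  simp [Jmat]

theorem Jmat_succ (P : ℕ → Matrix (Fin K) (Fin K) ℝ) {t s : ℕ} (h : s ≤ t + 1) :
    Jmat P (t + 1) s = P (t + 1) * Jmat P t s := by
  rw [Jmat, show t + 1 + 1 - s = (t + 1 - s) + 1 by omega, List.range'_1_concat,
    show s + (t + 1 - s) = t + 1 by omega]
  simp [Jmat]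

theorem Jmat_mem {S : Submonoid (Matrix (Fin K) (Fin K) ℝ)} {P : ℕ → Matrix (Fin K) (Fin K) ℝ}
    {s : ℕ} (hP : ∀ u, s ≤ u → P u ∈ S) (t : ℕ) : Jmat P t s ∈ S := by
  refine Submonoid.list_prod_mem _ fun A hA => ?_
  obtain ⟨u, hu, rfl⟩ := List.mem_map.1 hA
  exact hP u (List.mem_range'_1.1 (List.mem_reverse.1 hu)).1

theorem eq_Jmat_sum_of_rec {S Q P : ℕ → Matrix (Fin K) (Fin K) ℝ} {c : ℕ → ℝ}
    (hc : ∀ t, c t ≠ 0)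
    (hS : ∀ t, S (t + 1) = (c (t + 1) / c t) • (P (t + 1) * S t * (P (t + 1))ᵀ) + Q (t + 1))
    (T : ℕ) :
    S T = (c T / c 0) • (Jmat P T 1 * S 0 * (Jmat P T 1)ᵀ) +
      ∑ t ∈ Finset.Icc 1 T, (c T / c t) • (Jmat P T (t + 1) * Q t * (Jmat P T (t + 1))ᵀ) := by
  induction T with
  | zero => simp [Jmat_self, div_self (hc 0)]
  | succ T ih =>
    have hconj : ∀ (a : ℝ) (J X : Matrix (Fin K) (Fin K) ℝ),
        (c (T + 1) / c T) • (P (T + 1) * (a • (J * X * Jᵀ)) * (P (T + 1))ᵀ) =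
          (c (T + 1) / c T * a) • ((P (T + 1) * J) * X * (P (T + 1) * J)ᵀ) := by
      intro a J X
      simp only [Matrix.mul_smul, Matrix.smul_mul, smul_smul, Matrix.transpose_mul,
        Matrix.mul_assoc]
    have hratio : ∀ t, c (T + 1) / c T * (c T / c t) = c (T + 1) / c t := fun t => by
      field_simp [hc T, hc t]
    have hsum : ∑ t ∈ Finset.Icc 1 T,
          (c (T + 1) / c t) • (Jmat P (T + 1) (t + 1) * Q t * (Jmat P (T + 1) (t + 1))ᵀ) =
        ∑ t ∈ Finset.Icc 1 T, (c (T + 1) / c T) •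
          (P (T + 1) * ((c T / c t) • (Jmat P T (t + 1) * Q t * (Jmat P T (t + 1))ᵀ)) *
            (P (T + 1))ᵀ) :=
      Finset.sum_congr rfl fun t ht => by
        rw [hconj, hratio, Jmat_succ P (by simp at ht; omega)]
    rw [hS, ih, Finset.sum_Icc_succ_top (by omega), hsum, ← Finset.smul_sum, ← Finset.sum_mul,
      ← Finset.mul_sum, Matrix.mul_add, Matrix.add_mul, smul_add, hconj, hratio,
      ← Jmat_succ P (by omega), Jmat_self, div_self (hc _)]
    simp only [one_smul, Matrix.one_mul, transpose_one, Matrix.mul_one, add_assoc]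

end Jmat

section Model

variable {K d : ℕ} (E : Finset (Fin K × Fin K)) (pbar : ℕ → Fin K → Fin K → ℝ)
  (q : ℕ → Fin K → Fin K → ℝ) (p0 : Fin K → ℝ) (c : ℕ → ℝ)

theorem wgt_pos {t : ℕ} (hpos : ∀ ν μ, (ν, μ) ∈ E → 0 < pbar t ν μ) {ν : Fin K}
    (hν : ν ∈ Ml E) : 0 < wgt E pbar t ν := by
  refine Finset.sum_pos (fun m hm => hpos m ν ?_) ?_
  · simpa [Nin] using hm
  · simpa [Ml, Finset.nonempty_iff_ne_empty] using hν

theorem Pbar_mem_rowStochastic {t : ℕ} (hpos : ∀ ν μ, (ν, μ) ∈ E → 0 < pbar t ν μ) :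
    Pbar E pbar t ∈ rowStochastic ℝ (Fin K) := by
  refine mem_rowStochastic_iff_sum.2 ⟨fun μ ν => ?_, fun μ => ?_⟩
  · simp only [Pbar, of_apply]
    split_ifs with hμ hν
    · exact div_nonneg (hpos ν μ (by simpa [Nin] using hν)).le (wgt_pos E pbar hpos hμ).le
    all_goals norm_num
  · by_cases hμ : μ ∈ Ml E
    · simp only [Pbar, of_apply, if_pos hμ, Finset.sum_ite_mem, Finset.univ_inter,
        ← Finset.sum_div]
      exact div_self (wgt_pos E pbar hpos hμ).ne'
    · simp [Pbar, hμ]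

noncomputable def scalarVt (t : ℕ) : Matrix (Fin K) (Fin K) ℝ :=
  of fun μ ν => if μ ∈ Ml E ∧ ν ∈ Ml E then q t μ ν / (wgt E pbar t μ * wgt E pbar t ν) else 0

noncomputable def scalarCov : ℕ → Matrix (Fin K) (Fin K) ℝ
  | 0 => diagonal fun μ => 1 / p0 μ
  | t + 1 => (c (t + 1) / c t) • (Pbar E pbar (t + 1) * scalarCov t * (Pbar E pbar (t + 1))ᵀ) +
      scalarVt E pbar q (t + 1)

theorem kronId_eq_kronecker (Q : Matrix (Fin K) (Fin K) ℝ) :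
    kronId (d := d) Q = Q ⊗ₖ (1 : Matrix (Fin d) (Fin d) ℝ) := by
  ext ⟨μ, a⟩ ⟨ν, b⟩
  simp [kronId, one_apply]

theorem Vt_eq_kronecker (V : Matrix (Fin d) (Fin d) ℝ) (t : ℕ) :
    Vt E pbar q V t = scalarVt E pbar q t ⊗ₖ V := by
  ext ⟨μ, a⟩ ⟨ν, b⟩
  simp only [Vt, scalarVt, of_apply, kronecker_apply, ite_mul, zero_mul]

theorem Sigma0_empty_eq_kronecker (V : Matrix (Fin d) (Fin d) ℝ) :
    Sigma0 ∅ p0 V = diagonal (fun μ => 1 / p0 μ) ⊗ₖ V := by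
  ext ⟨μ, a⟩ ⟨ν, b⟩
  simp [Sigma0, diagonal_apply, ite_mul]

theorem eq_scalarCov_kronecker (V : Matrix (Fin d) (Fin d) ℝ)
    {Sig : ℕ → Matrix (Fin K × Fin d) (Fin K × Fin d) ℝ} (hSig0 : Sig 0 = Sigma0 ∅ p0 V)
    (hSigrec : ∀ t, 1 ≤ t → Sig t =
      (c t / c (t - 1)) • (kronId (Pbar E pbar t) * Sig (t - 1) * (kronId (Pbar E pbar t))ᵀ)
        + Vt E pbar q V t) (t : ℕ) :
    Sig t = scalarCov E pbar q p0 c t ⊗ₖ V := by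
  induction t with
  | zero => rw [hSig0, Sigma0_empty_eq_kronecker, scalarCov]
  | succ t ih =>
    rw [hSigrec (t + 1) (by omega), Nat.add_sub_cancel, ih, Vt_eq_kronecker, kronId_eq_kronecker,
      ← mul_kronecker_mul, ← kroneckerMap_transpose, ← mul_kronecker_mul, transpose_one,
      Matrix.one_mul, Matrix.mul_one, ← smul_kronecker, ← add_kronecker, scalarCov]

theorem scalarCov_eq_sum (hc : ∀ t, c t ≠ 0) (T : ℕ) :
    scalarCov E pbar q p0 c T =
      (c T / c 0) • (Jmat (Pbar E pbar) T 1 * diagonal (fun μ => 1 / p0 μ) *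
          (Jmat (Pbar E pbar) T 1)ᵀ) +
        ∑ t ∈ Finset.Icc 1 T, (c T / c t) • (Jmat (Pbar E pbar) T (t + 1) *
          scalarVt E pbar q t * (Jmat (Pbar E pbar) T (t + 1))ᵀ) :=
  eq_Jmat_sum_of_rec hc (fun _ => rfl) T

theorem sq_sum_div_le_dotProduct_scalarVt_mulVec {t : ℕ}
    (hpos : ∀ ν μ, (ν, μ) ∈ E → 0 < pbar t ν μ)
    (hqnn : ∀ ν₁ ∈ Ml E, ∀ ν₂ ∈ Ml E, 0 ≤ q t ν₁ ν₂)
    (hqdiag : ∀ ν ∈ Ml E, q t ν ν = wgt E pbar t ν) {x : Fin K → ℝ} (hx : ∀ i, 0 ≤ x i) :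
    (∑ ν ∈ Ml E, x ν) ^ 2 / ∑ ν ∈ Ml E, wgt E pbar t ν ≤ x ⬝ᵥ scalarVt E pbar q t *ᵥ x := by
  have hw := fun ν (hν : ν ∈ Ml E) => wgt_pos E pbar hpos hν
  refine sq_sum_div_le_dotProduct_mulVec _ (fun μ ν => ?_) hw (fun ν hν => ?_) hx
  · simp only [scalarVt, of_apply]
    split_ifs with h
    · exact div_nonneg (hqnn μ h.1 ν h.2) (mul_pos (hw μ h.1) (hw ν h.2)).le
    · exact le_rfl
  · simp only [scalarVt, of_apply, if_pos (And.intro hν hν), hqdiag ν hν]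
    field_simp [(hw ν hν).ne']

theorem le_scalarCov_apply_self (hc : ∀ t, 0 < c t)
    (hpos : ∀ t, 1 ≤ t → ∀ ν μ, (ν, μ) ∈ E → 0 < pbar t ν μ) (hp0 : ∀ ν, 0 < p0 ν)
    (hqnn : ∀ t, 1 ≤ t → ∀ ν₁ ∈ Ml E, ∀ ν₂ ∈ Ml E, 0 ≤ q t ν₁ ν₂)
    (hqdiag : ∀ t, 1 ≤ t → ∀ ν ∈ Ml E, q t ν ν = wgt E pbar t ν) (μ : Fin K) (T : ℕ) :
    (∑ t ∈ Finset.Icc 1 T,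
        (c T / c t) * (∑ ν ∈ Ml E, Jmat (Pbar E pbar) T (t + 1) μ ν) ^ 2 /
          (∑ ν ∈ Ml E, wgt E pbar t ν)) + (c T / c 0) / (∑ ν, p0 ν) ≤
      scalarCov E pbar q p0 c T μ μ := by
  have hJ : ∀ s, 1 ≤ s → Jmat (Pbar E pbar) T s ∈ rowStochastic ℝ (Fin K) := fun s hs =>
    Jmat_mem (fun u hu => Pbar_mem_rowStochastic E pbar (hpos u (by omega))) T
  rw [scalarCov_eq_sum E pbar q p0 c (fun t => (hc t).ne'), Matrix.add_apply, Matrix.smul_apply,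
    Matrix.sum_apply, mul_mul_transpose_apply_self, add_comm]
  refine add_le_add ?_ (Finset.sum_le_sum fun t ht => ?_)
  · have hS0 := sq_sum_div_le_dotProduct_mulVec Finset.univ (A := diagonal fun ν => 1 / p0 ν)
      (w := p0) (x := Jmat (Pbar E pbar) T 1 μ)
      (fun i j => by by_cases h : i = j <;> simp [h, (hp0 j).le])
      (fun ν _ => hp0 ν) (fun ν _ => by simp) (fun ν => nonneg_of_mem_rowStochastic (hJ 1 le_rfl))
    rw [sum_row_of_mem_rowStochastic (hJ 1 le_rfl), one_pow] at hS0
    rw [smul_eq_mul, div_eq_mul_one_div (c T / c 0)]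
    exact mul_le_mul_of_nonneg_left hS0 (div_pos (hc T) (hc 0)).le
  · have ht1 : 1 ≤ t := (Finset.mem_Icc.1 ht).1
    rw [Matrix.smul_apply, mul_mul_transpose_apply_self, smul_eq_mul, mul_div_assoc]
    exact mul_le_mul_of_nonneg_left
      (sq_sum_div_le_dotProduct_scalarVt_mulVec E pbar q (hpos t ht1) (hqnn t ht1) (hqdiag t ht1)
        fun ν => nonneg_of_mem_rowStochastic (hJ _ (by omega)))
      (div_pos (hc T) (hc t)).le
end Model

theorem stmt4_general
    {K d : ℕ}
    (E : Finset (Fin K × Fin K))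
    (α : ℝ) (hα0 : 0 < α)
    (Mnature : Finset (Fin K))
    (Vstar : Matrix (Fin d) (Fin d) ℝ) (hVpsd : Vstar.PosSemidef)
    (c : ℕ → ℝ) (hc : ∀ t, 0 < c t)
    (pbar : ℕ → Fin K → Fin K → ℝ)
    (hpbarα : ∀ t, 1 ≤ t → ∀ ν μ : Fin K, (ν, μ) ∈ E → α ≤ pbar t ν μ)
    (p0 : Fin K → ℝ) (hp0α : ∀ μ ∉ Mnature, α ≤ p0 μ)
    (q : ℕ → Fin K → Fin K → ℝ)
    (hqnn : ∀ t, 1 ≤ t → ∀ ν₁ ∈ Ml E, ∀ ν₂ ∈ Ml E, 0 ≤ q t ν₁ ν₂)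
    (hqdiag : ∀ t, 1 ≤ t → ∀ ν ∈ Ml E, q t ν ν = wgt E pbar t ν)
    (Sig : ℕ → Matrix (Fin K × Fin d) (Fin K × Fin d) ℝ)
    (hSig0 : Sig 0 = Sigma0 Mnature p0 Vstar)
    (hSigrec : ∀ t, 1 ≤ t → Sig t =
      (c t / c (t - 1)) • (kronId (Pbar E pbar t) * Sig (t - 1) * (kronId (Pbar E pbar t))ᵀ)
        + Vt E pbar q Vstar t)
    (hMnatEmpty : Mnature = ∅) :
    ∀ μ ∈ Ml E, ∀ T : ℕ, 1 ≤ T →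
      (Matrix.of (fun a b : Fin d => Sig T (μ, a) (μ, b)) -
        ((∑ t ∈ Finset.Icc 1 T,
            (c T / c t) * (∑ ν ∈ Ml E, Jmat (Pbar E pbar) T (t + 1) μ ν) ^ 2 /
              (∑ ν ∈ Ml E, wgt E pbar t ν)) +
          (c T / c 0) / (∑ ν : Fin K, p0 ν)) • Vstar).PosSemidef := by
  subst hMnatEmpty
  intro μ _ T _
  have hpos : ∀ t, 1 ≤ t → ∀ ν μ, (ν, μ) ∈ E → 0 < pbar t ν μ := fun t ht ν μ h =>
    hα0.trans_le (hpbarα t ht ν μ h)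
  have hp0 : ∀ ν, 0 < p0 ν := fun ν => hα0.trans_le (hp0α ν (Finset.notMem_empty ν))
  have hblock : Matrix.of (fun a b : Fin d => Sig T (μ, a) (μ, b)) =
      scalarCov E pbar q p0 c T μ μ • Vstar := by
    ext a b
    simp [eq_scalarCov_kronecker E pbar q p0 c Vstar hSig0 hSigrec T]
  rw [hblock, ← sub_smul]
  exact hVpsd.smul (sub_nonneg.2
    (le_scalarCov_apply_self E pbar q p0 c hc hpos hp0 hqnn hqdiag μ T))

/-- When `M_nature = ∅`, for every `μ ∈ M_l` and `T ≥ 1`,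
`Σ_{T,μ,μ} ⪰ (∑_{t=1}^T b_{T,t} (∑_{ν∈M_l} J̄_{T,t+1,μ,ν})² / (∑_{ν∈M_l} w_{t,ν})
 + b_{T,0} / (∑_{ν∈M} p̄_{0,ν})) · V*` in the positive semidefinite order. -/
theorem stmt4
    {K d : ℕ} (hK : 1 ≤ K) (hd : 1 ≤ d)
    (E : Finset (Fin K × Fin K))
    (α ᾱ : ℝ) (hα0 : 0 < α) (hα1 : α ≤ 1) (hᾱ : 1 ≤ ᾱ)
    (Mnature : Finset (Fin K)) (hMnat : Mnature ⊆ Mu E)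
    (Vstar : Matrix (Fin d) (Fin d) ℝ) (hVpsd : Vstar.PosSemidef) (hVtr : 0 < Vstar.trace)
    (c : ℕ → ℝ) (hc : ∀ t, 0 < c t)
    (hb : ∀ t s : ℕ, α ≤ c t / c s ∧ c t / c s ≤ ᾱ)
    (pbar : ℕ → Fin K → Fin K → ℝ)
    (hpbarα : ∀ t, 1 ≤ t → ∀ ν μ : Fin K, (ν, μ) ∈ E → α ≤ pbar t ν μ)
    (hpbarsum : ∀ t, 1 ≤ t → ∑ e ∈ E, pbar t e.1 e.2 ≤ 1)
    (p0 : Fin K → ℝ) (hp0α : ∀ μ ∉ Mnature, α ≤ p0 μ)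
    (hp0sum : ∑ μ ∈ Finset.univ \ Mnature, p0 μ ≤ 1)
    (q : ℕ → Fin K → Fin K → ℝ)
    (hqsymm : ∀ t, 1 ≤ t → ∀ ν₁ ∈ Ml E, ∀ ν₂ ∈ Ml E, q t ν₁ ν₂ = q t ν₂ ν₁)
    (hqnn : ∀ t, 1 ≤ t → ∀ ν₁ ∈ Ml E, ∀ ν₂ ∈ Ml E, 0 ≤ q t ν₁ ν₂)
    (hqle : ∀ t, 1 ≤ t → ∀ ν₁ ∈ Ml E, ∀ ν₂ ∈ Ml E,
      q t ν₁ ν₂ ≤ min (wgt E pbar t ν₁) (wgt E pbar t ν₂))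
    (hqdiag : ∀ t, 1 ≤ t → ∀ ν ∈ Ml E, q t ν ν = wgt E pbar t ν)
    (Sig : ℕ → Matrix (Fin K × Fin d) (Fin K × Fin d) ℝ)
    (hSig0 : Sig 0 = Sigma0 Mnature p0 Vstar)
    (hSigrec : ∀ t, 1 ≤ t → Sig t =
      (c t / c (t - 1)) • (kronId (Pbar E pbar t) * Sig (t - 1) * (kronId (Pbar E pbar t))ᵀ)
        + Vt E pbar q Vstar t)
    (hMnatEmpty : Mnature = ∅) :
    ∀ μ ∈ Ml E, ∀ T : ℕ, 1 ≤ T →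
      (Matrix.of (fun a b : Fin d => Sig T (μ, a) (μ, b)) -
        ((∑ t ∈ Finset.Icc 1 T,
            (c T / c t) * (∑ ν ∈ Ml E, Jmat (Pbar E pbar) T (t + 1) μ ν) ^ 2 /
              (∑ ν ∈ Ml E, wgt E pbar t ν)) +
          (c T / c 0) / (∑ ν : Fin K, p0 ν)) • Vstar).PosSemidef :=
  stmt4_general E α hα0 Mnature Vstar hVpsd c hc pbar hpbarα p0 hp0α q hqnn hqdiag Sig hSig0 hSigrec
    hMnatEmpty
end

section
/- For every pair of integers t ≥ s ≥ 0 and every pair of nodes ν_1, ν_2 ∈ M, with probability at least 1 − δ · ∑_{j=1}^{t−s} N_max^j, the corresponding block of the product of the random block matrices is close to the block of the product of the deterministic ones: ‖Ω*_{t,s+1,ν_1,ν_2} − Ω_{t,s+1,ν_1,ν_2}‖_op ≤ γ_1 · ∑_{j=1}^{t−s} N_max^j. -/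
open MeasureTheory ProbabilityTheory Matrix Finset

noncomputable section

/-- The ℓ²-operator norm of a real matrix. -/
def opNorm {m n : ℕ} (A : Matrix (Fin m) (Fin n) ℝ) : ℝ :=
  ‖(Matrix.toEuclideanLin A).toContinuousLinearMap‖

/-- `N_max = max_{μ∈M} |Nin(μ)|`. -/
def Nmax {K : ℕ} (E : Finset (Fin K × Fin K)) : ℕ :=
  Finset.univ.sup (fun μ : Fin K => (Nin E μ).card)

/-- A `dK×dK` block matrix built from `d×d` blocks. -/
def ofBlocks {K d : ℕ} (B : Fin K → Fin K → Matrix (Fin d) (Fin d) ℝ) :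
    Matrix (Fin K × Fin d) (Fin K × Fin d) ℝ :=
  Matrix.of fun p r => B p.1 r.1 p.2 r.2

/-- The `(i,j)` d×d block of a `dK×dK` matrix. -/
def blockOf {K d : ℕ} (A : Matrix (Fin K × Fin d) (Fin K × Fin d) ℝ) (i j : Fin K) :
    Matrix (Fin d) (Fin d) ℝ :=
  Matrix.of fun a b => A (i, a) (j, b)

/-- The ordered product `Ω_{t,s} = T_t T_{t−1} ⋯ T_s` (equal to `I` when `s = t + 1`). -/
def Omega {K d : ℕ} (T : ℕ → Matrix (Fin K × Fin d) (Fin K × Fin d) ℝ) (t s : ℕ) :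
    Matrix (Fin K × Fin d) (Fin K × Fin d) ℝ :=
  ((List.range' s (t + 1 - s)).reverse.map T).prod

/-- The deterministic blocks `T*_{t,μ,ν}`: `p_{t,ν→μ}·I_d` for `μ ∈ M_l`, `ν ∈ Nin(μ)`;
`I_d` for `μ = ν ∈ M_u`; `0` otherwise. -/
def Tstar {K d : ℕ} (E : Finset (Fin K × Fin K)) (p : ℕ → Fin K → Fin K → ℝ) (t : ℕ)
    (μ ν : Fin K) : Matrix (Fin d) (Fin d) ℝ :=
  if μ ∈ Ml E then (if ν ∈ Nin E μ then p t ν μ • (1 : Matrix (Fin d) (Fin d) ℝ) else 0)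
  else (if μ = ν then 1 else 0)

end

/-!
Write `S m = ∑_{j=1}^m N^j` with `N = Nmax E`, and compare the `(·, ν₂)` block columns `X*`, `X`
of the deterministic and random products over `m` steps. Appending one step gives, for a learning
node `μ`, `X*' μ - X' μ = ∑_{k ∈ Nin μ} ((T* - T) μ k) X* k + T μ k (X* k - X k)`, while the row of
a source node is `I_d` in both products and reproduces the previous difference. All blocks of the
products of the `T*` and all blocks of `T` have norm at most one, so the new deviation exceeds
`γ₁ N (1 + S m) = γ₁ S (m + 1)` only if one of the at most `N` incoming edges violates the
concentration bound or one of the at most `N` previous deviations exceeds `γ₁ S m`. A union bound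
turns this into the failure probability `δ N (1 + S m) = δ S (m + 1)`.
-/

open scoped Matrix.Norms.L2Operator

lemma norm_mul_sub_mul_le_of_norm_le_one {R : Type*} [SeminormedRing R] {a a' b b' : R}
    (ha : ‖a‖ ≤ 1) (hb' : ‖b'‖ ≤ 1) : ‖a' * b' - a * b‖ ≤ ‖a' - a‖ + ‖b' - b‖ :=
  calc ‖a' * b' - a * b‖ = ‖(a' - a) * b' + a * (b' - b)‖ := by congr 1; noncomm_ring
    _ ≤ ‖a' - a‖ * ‖b'‖ + ‖a‖ * ‖b' - b‖ :=
      (norm_add_le _ _).trans (add_le_add (norm_mul_le _ _) (norm_mul_le _ _))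
    _ ≤ ‖a' - a‖ + ‖b' - b‖ :=
      add_le_add (mul_le_of_le_one_right (norm_nonneg _) hb')
        (mul_le_of_le_one_left (norm_nonneg _) ha)

lemma sum_Icc_one_pow_succ {R : Type*} [CommRing R] (x : R) (m : ℕ) :
    ∑ j ∈ Icc 1 (m + 1), x ^ j = x * (1 + ∑ j ∈ Icc 1 m, x ^ j) := by
  induction m with
  | zero => simp
  | succ m ih =>
    have h := sum_Icc_succ_top (show 1 ≤ m + 1 by omega) (x ^ ·)
    rw [sum_Icc_succ_top (by omega)]
    linear_combination ih - x * h

lemma ofReal_one_sub_le_measure_compl {Ω : Type*} [MeasurableSpace Ω] {P : Measure Ω}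
    [IsProbabilityMeasure P] {s : Set Ω} {x : ℝ} (hx : 0 ≤ x) (hs : P s ≤ ENNReal.ofReal x) :
    ENNReal.ofReal (1 - x) ≤ P sᶜ :=
  calc ENNReal.ofReal (1 - x) = 1 - ENNReal.ofReal x := by
        rw [ENNReal.ofReal_sub _ hx, ENNReal.ofReal_one]
    _ ≤ 1 - P s := tsub_le_tsub_left hs 1
    _ ≤ P sᶜ := by
        rw [tsub_le_iff_left, ← measure_univ (μ := P)]
        exact measure_univ_le_add_compl s

lemma Matrix.l2_opNorm_one_le {𝕜 n : Type*} [RCLike 𝕜] [Fintype n] [DecidableEq n] :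
    ‖(1 : Matrix n n 𝕜)‖ ≤ 1 := by
  rw [← Matrix.l2_opNorm_toEuclideanCLM, map_one]
  exact ContinuousLinearMap.norm_id_le

section Blocks

variable {K d : ℕ}

lemma blockOf_mul (A B : Matrix (Fin K × Fin d) (Fin K × Fin d) ℝ) (i j : Fin K) :
    blockOf (A * B) i j = ∑ k, blockOf A i k * blockOf B k j := by
  ext a b
  simp only [blockOf, Matrix.of_apply, Matrix.mul_apply, Matrix.sum_apply, Fintype.sum_prod_type]

lemma blockOf_one (i j : Fin K) :
    blockOf (1 : Matrix (Fin K × Fin d) (Fin K × Fin d) ℝ) i j = if i = j then 1 else 0 := by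
  ext a b
  by_cases h : i = j <;> simp [blockOf, Matrix.one_apply, h]

lemma Omega_succ_self (T : ℕ → Matrix (Fin K × Fin d) (Fin K × Fin d) ℝ) (s : ℕ) :
    Omega T s (s + 1) = 1 := by
  simp [Omega]

lemma Omega_add_one (T : ℕ → Matrix (Fin K × Fin d) (Fin K × Fin d) ℝ) (s m : ℕ) :
    Omega T (s + m + 1) (s + 1) = T (s + m + 1) * Omega T (s + m) (s + 1) := by
  rw [Omega, Omega, show s + m + 1 + 1 - (s + 1) = m + 1 by omega,
    show s + m + 1 - (s + 1) = m by omega, List.range'_concat]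
  simp [add_right_comm s 1 m]

def blockProd (A : ℕ → Fin K → Fin K → Matrix (Fin d) (Fin d) ℝ) (t s : ℕ) (i j : Fin K) :
    Matrix (Fin d) (Fin d) ℝ :=
  blockOf (Omega (fun r => ofBlocks (A r)) t s) i j

variable (A : ℕ → Fin K → Fin K → Matrix (Fin d) (Fin d) ℝ)

lemma blockProd_succ_self (s : ℕ) (i j : Fin K) :
    blockProd A s (s + 1) i j = if i = j then 1 else 0 := by
  rw [blockProd, Omega_succ_self, blockOf_one]

lemma blockProd_add_one (s m : ℕ) (i j : Fin K) :
    blockProd A (s + m + 1) (s + 1) i j =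
      ∑ k, A (s + m + 1) i k * blockProd A (s + m) (s + 1) k j := by
  rw [blockProd, Omega_add_one, blockOf_mul]
  rfl

lemma norm_blockProd_le_one {s : ℕ} (hA : ∀ r, s < r → ∀ i, ∑ k, ‖A r i k‖ ≤ 1) (m : ℕ)
    (i j : Fin K) : ‖blockProd A (s + m) (s + 1) i j‖ ≤ 1 := by
  induction m generalizing i with
  | zero =>
    rw [Nat.add_zero, blockProd_succ_self]
    split_ifs
    exacts [Matrix.l2_opNorm_one_le, norm_zero.trans_le zero_le_one]
  | succ m ih =>
    rw [← add_assoc, blockProd_add_one]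
    calc ‖∑ k, A (s + m + 1) i k * blockProd A (s + m) (s + 1) k j‖
        ≤ ∑ k, ‖A (s + m + 1) i k‖ * ‖blockProd A (s + m) (s + 1) k j‖ :=
          (norm_sum_le _ _).trans (sum_le_sum fun k _ => norm_mul_le _ _)
      _ ≤ ∑ k, ‖A (s + m + 1) i k‖ :=
          sum_le_sum fun k _ => mul_le_of_le_one_right (norm_nonneg _) (ih k)
      _ ≤ 1 := hA _ (by omega) i

end Blocks

section Graph

variable {K d : ℕ} {E : Finset (Fin K × Fin K)}

lemma mem_Mu_iff_notMem_Ml {μ : Fin K} : μ ∈ Mu E ↔ μ ∉ Ml E := by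
  simp [Mu, Ml]

lemma card_Nin_le_Nmax (E : Finset (Fin K × Fin K)) (μ : Fin K) : #(Nin E μ) ≤ Nmax E :=
  le_sup (f := fun μ => #(Nin E μ)) (mem_univ μ)

lemma Tstar_of_mem_Ml {p : ℕ → Fin K → Fin K → ℝ} {t : ℕ} {μ : Fin K} (hμ : μ ∈ Ml E)
    (ν : Fin K) :
    (Tstar E p t μ ν : Matrix (Fin d) (Fin d) ℝ) = if ν ∈ Nin E μ then p t ν μ • 1 else 0 := by
  simp [Tstar, hμ]

lemma Tstar_of_mem_Mu {p : ℕ → Fin K → Fin K → ℝ} {t : ℕ} {μ : Fin K} (hμ : μ ∈ Mu E)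
    (ν : Fin K) : (Tstar E p t μ ν : Matrix (Fin d) (Fin d) ℝ) = if μ = ν then 1 else 0 := by
  simp [Tstar, mem_Mu_iff_notMem_Ml.1 hμ]

lemma sum_norm_Tstar_le_one {p : ℕ → Fin K → Fin K → ℝ} {t : ℕ} (hp : ∀ ν μ, 0 ≤ p t ν μ)
    (hrow : ∀ μ ∈ Ml E, ∑ ν ∈ Nin E μ, p t ν μ = 1) (μ : Fin K) :
    ∑ ν, ‖(Tstar E p t μ ν : Matrix (Fin d) (Fin d) ℝ)‖ ≤ 1 := by
  by_cases hμ : μ ∈ Ml E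
  · simp_rw [Tstar_of_mem_Ml hμ, apply_ite norm, norm_zero, sum_ite_mem, univ_inter]
    calc ∑ ν ∈ Nin E μ, ‖p t ν μ • (1 : Matrix (Fin d) (Fin d) ℝ)‖
        ≤ ∑ ν ∈ Nin E μ, p t ν μ := sum_le_sum fun ν _ => by
          rw [norm_smul, Real.norm_of_nonneg (hp ν μ)]
          exact mul_le_of_le_one_right (hp ν μ) Matrix.l2_opNorm_one_le
      _ = 1 := hrow μ hμ
  · simp_rw [Tstar_of_mem_Mu (mem_Mu_iff_notMem_Ml.2 hμ), apply_ite norm, norm_zero,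
      sum_ite_eq, if_pos (mem_univ μ)]
    exact Matrix.l2_opNorm_one_le

structure IsGraphStep (E : Finset (Fin K × Fin K)) (A : Fin K → Fin K → Matrix (Fin d) (Fin d) ℝ) :
    Prop where
  norm_le_one : ∀ μ ν, ‖A μ ν‖ ≤ 1
  eq_zero : ∀ μ ν, ¬ ((μ ∈ Ml E ∧ ν ∈ Nin E μ) ∨ (μ = ν ∧ μ ∈ Mu E)) → A μ ν = 0
  diag_eq_one : ∀ μ ∈ Mu E, A μ μ = 1

namespace IsGraphStep

variable {A : Fin K → Fin K → Matrix (Fin d) (Fin d) ℝ}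

lemma eq_zero_of_notMem_Nin (hA : IsGraphStep E A) {μ ν : Fin K} (hμ : μ ∈ Ml E)
    (hν : ν ∉ Nin E μ) : A μ ν = 0 :=
  hA.eq_zero μ ν <| by
    rintro (⟨-, h⟩ | ⟨rfl, h⟩)
    exacts [hν h, mem_Mu_iff_notMem_Ml.1 h hμ]

lemma eq_Tstar_of_mem_Mu (hA : IsGraphStep E A) (p : ℕ → Fin K → Fin K → ℝ) (t : ℕ)
    {μ : Fin K} (hμ : μ ∈ Mu E) (ν : Fin K) : A μ ν = Tstar E p t μ ν := by
  rw [Tstar_of_mem_Mu hμ]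
  split_ifs with h
  · exact h ▸ hA.diag_eq_one μ hμ
  · exact hA.eq_zero μ ν fun h' => h'.elim
      (fun ⟨hl, _⟩ => mem_Mu_iff_notMem_Ml.1 hμ hl) (fun ⟨he, _⟩ => h he)

end IsGraphStep

lemma ae_isGraphStep {Ω : Type*} [MeasurableSpace Ω] {P : Measure Ω}
    {T : Fin K → Fin K → Ω → Matrix (Fin d) (Fin d) ℝ}
    (hzero : ∀ μ ν, ¬ ((μ ∈ Ml E ∧ ν ∈ Nin E μ) ∨ (μ = ν ∧ μ ∈ Mu E)) → ∀ᵐ ω ∂P, T μ ν ω = 0)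
    (hdiag : ∀ μ ∈ Mu E, ∀ᵐ ω ∂P, T μ μ ω = 1) (hnorm : ∀ μ ν, ∀ᵐ ω ∂P, ‖T μ ν ω‖ ≤ 1) :
    ∀ᵐ ω ∂P, IsGraphStep E (fun μ ν => T μ ν ω) := by
  have hzero' : ∀ᵐ ω ∂P, ∀ μ ν, ¬ ((μ ∈ Ml E ∧ ν ∈ Nin E μ) ∨ (μ = ν ∧ μ ∈ Mu E)) →
      T μ ν ω = 0 := by
    simp only [ae_all_iff, Filter.eventually_imp_distrib_left]
    exact hzero
  have hdiag' : ∀ᵐ ω ∂P, ∀ μ ∈ Mu E, T μ μ ω = 1 := by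
    simp only [ae_all_iff, Filter.eventually_imp_distrib_left]
    exact hdiag
  filter_upwards [ae_all_iff.2 fun μ => ae_all_iff.2 (hnorm μ), hzero', hdiag'] with ω h₁ h₂ h₃
  exact ⟨h₁, h₂, h₃⟩

end Graph

section Concentration

variable {K d : ℕ} {E : Finset (Fin K × Fin K)} {p : ℕ → Fin K → Fin K → ℝ}

lemma blockProd_Tstar_sub_add_one_of_mem_Mu {B : ℕ → Fin K → Fin K → Matrix (Fin d) (Fin d) ℝ}
    {s m : ℕ} (hB : IsGraphStep E (B (s + m + 1))) {μ : Fin K} (hμ : μ ∈ Mu E) (j : Fin K) :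
    blockProd (Tstar E p) (s + m + 1) (s + 1) μ j - blockProd B (s + m + 1) (s + 1) μ j =
      blockProd (Tstar E p) (s + m) (s + 1) μ j - blockProd B (s + m) (s + 1) μ j := by
  simp only [blockProd_add_one, hB.eq_Tstar_of_mem_Mu p (s + m + 1) hμ, Tstar_of_mem_Mu hμ,
    ite_mul, one_mul, zero_mul, sum_ite_eq, mem_univ, if_true]

lemma norm_blockProd_Tstar_sub_add_one_le_of_mem_Ml
    {B : ℕ → Fin K → Fin K → Matrix (Fin d) (Fin d) ℝ} {s m : ℕ}
    (hB : IsGraphStep E (B (s + m + 1))) {μ : Fin K} (hμ : μ ∈ Ml E) {j : Fin K}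
    (hstar : ∀ k, ‖blockProd (Tstar E p (d := d)) (s + m) (s + 1) k j‖ ≤ 1) {γ f : ℝ}
    (hstep : ∀ k ∈ Nin E μ, ‖B (s + m + 1) μ k - p (s + m + 1) k μ • 1‖ < γ)
    (hprev : ∀ k ∈ Nin E μ,
      ‖blockProd (Tstar E p) (s + m) (s + 1) k j - blockProd B (s + m) (s + 1) k j‖ ≤ f) :
    ‖blockProd (Tstar E p) (s + m + 1) (s + 1) μ j - blockProd B (s + m + 1) (s + 1) μ j‖ ≤
      #(Nin E μ) * (γ + f) := by
  rw [blockProd_add_one, blockProd_add_one, ← sum_sub_distrib,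
    ← sum_subset (subset_univ (Nin E μ)) fun k _ hk => by
      rw [Tstar_of_mem_Ml hμ, if_neg hk, hB.eq_zero_of_notMem_Nin hμ hk, zero_mul, zero_mul,
        sub_zero], ← nsmul_eq_mul]
  refine (norm_sum_le _ _).trans (sum_le_card_nsmul _ _ _ fun k hk => ?_)
  refine (norm_mul_sub_mul_le_of_norm_le_one (hB.norm_le_one μ k) (hstar k)).trans
    (add_le_add ?_ (hprev k hk))
  rw [Tstar_of_mem_Ml hμ, if_pos hk, norm_sub_rev]
  exact (hstep k hk).le

variable {Ω : Type*} [MeasurableSpace Ω] {P : Measure Ω}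

lemma measure_mono_of_ae_of_imp {s t : Set Ω} {q : Ω → Prop} (hq : ∀ᵐ ω ∂P, q ω)
    (h : ∀ ω, q ω → ω ∈ s → ω ∈ t) : P s ≤ P t :=
  measure_mono_ae (hq.mono h)

noncomputable def blockDeviation (E : Finset (Fin K × Fin K)) (p : ℕ → Fin K → Fin K → ℝ)
    (T : ℕ → Fin K → Fin K → Ω → Matrix (Fin d) (Fin d) ℝ) (t s : ℕ) (i j : Fin K) (ω : Ω) : ℝ :=
  ‖blockProd (Tstar E p) t s i j - blockProd (fun r μ ν => T r μ ν ω) t s i j‖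

variable {T : ℕ → Fin K → Fin K → Ω → Matrix (Fin d) (Fin d) ℝ} {s m : ℕ} {i j : Fin K}
  {γ δ S : ℝ}

lemma measure_blockDeviation_add_one_gt_le_of_mem_Ml
    (hT : ∀ᵐ ω ∂P, IsGraphStep E (fun μ ν => T (s + m + 1) μ ν ω)) (hi : i ∈ Ml E)
    (hstar : ∀ k, ‖blockProd (Tstar E p (d := d)) (s + m) (s + 1) k j‖ ≤ 1)
    (hγ : 0 ≤ γ) (hδ : 0 ≤ δ) (hS : 0 ≤ S)
    (hconc : ∀ k ∈ Nin E i,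
      P {ω | γ ≤ ‖T (s + m + 1) i k ω - p (s + m + 1) k i • 1‖} ≤ ENNReal.ofReal δ)
    (hprev : ∀ k, P {ω | γ * S < blockDeviation E p T (s + m) (s + 1) k j ω} ≤
      ENNReal.ofReal (δ * S)) :
    P {ω | γ * (Nmax E * (1 + S)) < blockDeviation E p T (s + m + 1) (s + 1) i j ω} ≤
      ENNReal.ofReal (δ * (Nmax E * (1 + S))) := by
  have hcard := card_Nin_le_Nmax E i
  calc P {ω | γ * (Nmax E * (1 + S)) < blockDeviation E p T (s + m + 1) (s + 1) i j ω}
      ≤ P (⋃ k ∈ Nin E i,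
          ({ω | γ ≤ ‖T (s + m + 1) i k ω - p (s + m + 1) k i • 1‖} ∪
           {ω | γ * S < blockDeviation E p T (s + m) (s + 1) k j ω})) := by
        refine measure_mono_of_ae_of_imp hT fun ω hω hbad => ?_
        simp only [Set.mem_iUnion, Set.mem_union, Set.mem_ofPred_eq] at hbad ⊢
        by_contra! hgood
        refine hbad.not_ge ?_
        calc blockDeviation E p T (s + m + 1) (s + 1) i j ω
            ≤ #(Nin E i) * (γ + γ * S) :=
              norm_blockProd_Tstar_sub_add_one_le_of_mem_Ml hω hi hstar
                (fun k hk => (hgood k hk).1) (fun k hk => (hgood k hk).2)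
          _ ≤ γ * (Nmax E * (1 + S)) := by
              rw [show γ * (Nmax E * (1 + S)) = Nmax E * (γ + γ * S) by ring]
              gcongr
    _ ≤ ∑ k ∈ Nin E i, (ENNReal.ofReal δ + ENNReal.ofReal (δ * S)) :=
        (measure_biUnion_finset_le _ _).trans <| sum_le_sum fun k hk =>
          (measure_union_le _ _).trans (add_le_add (hconc k hk) (hprev k))
    _ ≤ ENNReal.ofReal (δ * (Nmax E * (1 + S))) := by
        rw [← ENNReal.ofReal_add hδ (by positivity), sum_const, nsmul_eq_mul,
          ← ENNReal.ofReal_natCast, ← ENNReal.ofReal_mul (Nat.cast_nonneg _), mul_left_comm,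
          mul_one_add δ]
        gcongr

lemma measure_blockDeviation_add_one_gt_le_of_mem_Mu
    (hT : ∀ᵐ ω ∂P, IsGraphStep E (fun μ ν => T (s + m + 1) μ ν ω)) (hi : i ∈ Mu E)
    (hγ : 0 ≤ γ) {S' : ℝ} (hSS' : S ≤ S') :
    P {ω | γ * S' < blockDeviation E p T (s + m + 1) (s + 1) i j ω} ≤
      P {ω | γ * S < blockDeviation E p T (s + m) (s + 1) i j ω} := by
  refine measure_mono_of_ae_of_imp hT fun ω hω hbad => ?_
  simp only [Set.mem_ofPred_eq, blockDeviation] at hbad ⊢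
  rw [blockProd_Tstar_sub_add_one_of_mem_Mu (B := fun r μ ν => T r μ ν ω) hω hi] at hbad
  exact lt_of_le_of_lt (by gcongr) hbad

lemma measure_blockDeviation_gt_le
    (hpnn : ∀ t, 1 ≤ t → ∀ ν μ : Fin K, 0 ≤ p t ν μ)
    (hprow : ∀ t, 1 ≤ t → ∀ μ ∈ Ml E, ∑ ν ∈ Nin E μ, p t ν μ = 1)
    (hT : ∀ t, 1 ≤ t → ∀ᵐ ω ∂P, IsGraphStep E (fun μ ν => T t μ ν ω))
    (hγ : 0 ≤ γ) (hδ : 0 ≤ δ)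
    (hconc : ∀ t, 1 ≤ t → ∀ μ ∈ Ml E, ∀ ν ∈ Nin E μ,
      P {ω | γ ≤ ‖T t μ ν ω - p t ν μ • (1 : Matrix (Fin d) (Fin d) ℝ)‖} ≤ ENNReal.ofReal δ)
    (s m : ℕ) (i j : Fin K) :
    P {ω | γ * ∑ n ∈ Icc 1 m, (Nmax E : ℝ) ^ n < blockDeviation E p T (s + m) (s + 1) i j ω} ≤
      ENNReal.ofReal (δ * ∑ n ∈ Icc 1 m, (Nmax E : ℝ) ^ n) := by
  induction m generalizing i with
  | zero => simp [blockDeviation, blockProd_succ_self]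
  | succ m ih =>
    set S := ∑ n ∈ Icc 1 m, (Nmax E : ℝ) ^ n
    have hS : ∑ n ∈ Icc 1 (m + 1), (Nmax E : ℝ) ^ n = Nmax E * (1 + S) :=
      sum_Icc_one_pow_succ _ m
    have hr : 1 ≤ s + m + 1 := by omega
    rw [hS, ← add_assoc]
    by_cases hi : i ∈ Ml E
    · refine measure_blockDeviation_add_one_gt_le_of_mem_Ml (hT _ hr) hi
        (fun k => norm_blockProd_le_one _ (fun r hr => sum_norm_Tstar_le_one
          (hpnn r (by omega)) (hprow r (by omega))) m k j)
        hγ hδ (by positivity) (hconc _ hr i hi) ih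
    · have hSle : S ≤ Nmax E * (1 + S) := by
        rw [← hS]
        exact sum_le_sum_of_subset_of_nonneg (Icc_subset_Icc_right (by omega))
          fun _ _ _ => by positivity
      calc _ ≤ P {ω | γ * S < blockDeviation E p T (s + m) (s + 1) i j ω} :=
            measure_blockDeviation_add_one_gt_le_of_mem_Mu (hT _ hr)
              (mem_Mu_iff_notMem_Ml.2 hi) hγ hSle
        _ ≤ ENNReal.ofReal (δ * S) := ih i
        _ ≤ ENNReal.ofReal (δ * (Nmax E * (1 + S))) := by gcongr

end Concentration

theorem stmt7_general
    {K d : ℕ}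
    (E : Finset (Fin K × Fin K))
    {Ω : Type*} [MeasurableSpace Ω] (P : Measure Ω) [IsProbabilityMeasure P]
    (T : ℕ → Fin K → Fin K → Ω → Matrix (Fin d) (Fin d) ℝ)
    (p : ℕ → Fin K → Fin K → ℝ)
    (hpnn : ∀ t, 1 ≤ t → ∀ ν μ : Fin K, 0 ≤ p t ν μ)
    (hprow : ∀ t, 1 ≤ t → ∀ μ ∈ Ml E, ∑ ν ∈ Nin E μ, p t ν μ = 1)
    (hTzero : ∀ t, 1 ≤ t → ∀ μ ν : Fin K,
      ¬ ((μ ∈ Ml E ∧ ν ∈ Nin E μ) ∨ (μ = ν ∧ μ ∈ Mu E)) → ∀ᵐ ω ∂P, T t μ ν ω = 0)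
    (hTu : ∀ t, 1 ≤ t → ∀ μ ∈ Mu E, ∀ᵐ ω ∂P, T t μ μ ω = 1)
    (hTbd : ∀ t, 1 ≤ t → ∀ μ ν : Fin K, ∀ᵐ ω ∂P, opNorm (T t μ ν ω) ≤ 1)
    (γ₁ δ : ℝ) (hγ₁0 : 0 < γ₁) (hδ0 : 0 < δ)
    (hconc : ∀ t, 1 ≤ t → ∀ μ ∈ Ml E, ∀ ν ∈ Nin E μ,
      P {ω | γ₁ ≤ opNorm (T t μ ν ω - p t ν μ • (1 : Matrix (Fin d) (Fin d) ℝ))} ≤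
        ENNReal.ofReal δ) :
    ∀ t s : ℕ, s ≤ t → ∀ ν₁ ν₂ : Fin K,
      ENNReal.ofReal (1 - δ * ∑ j ∈ Finset.Icc 1 (t - s), (Nmax E : ℝ) ^ j) ≤
        P {ω |
          opNorm (blockOf (Omega (fun r => ofBlocks (Tstar E p r)) t (s + 1)) ν₁ ν₂ -
              blockOf (Omega (fun r => ofBlocks (fun μ ν => T r μ ν ω)) t (s + 1)) ν₁ ν₂) ≤
            γ₁ * ∑ j ∈ Finset.Icc 1 (t - s), (Nmax E : ℝ) ^ j} := by
  intro t s hst ν₁ ν₂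
  obtain ⟨m, rfl⟩ := Nat.exists_eq_add_of_le hst
  rw [Nat.add_sub_cancel_left]
  have hbad := measure_blockDeviation_gt_le hpnn hprow
    (fun t ht => ae_isGraphStep (hTzero t ht) (hTu t ht) (hTbd t ht)) hγ₁0.le hδ0.le hconc
    s m ν₁ ν₂
  convert ofReal_one_sub_le_measure_compl (by positivity) hbad using 2
  ext ω
  simp only [Set.mem_compl_iff, Set.mem_ofPred_eq, not_lt]
  rfl

/-- Concentration of products of random block matrices around the products of
their deterministic counterparts: for all `t ≥ s ≥ 0` and `ν₁, ν₂ ∈ M`, with probability at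
least `1 − δ·∑_{j=1}^{t−s} N_max^j`,
`‖Ω*_{t,s+1,ν₁,ν₂} − Ω_{t,s+1,ν₁,ν₂}‖_op ≤ γ₁·∑_{j=1}^{t−s} N_max^j`. -/
theorem stmt7
    {K d : ℕ} (hK : 1 ≤ K) (hd : 1 ≤ d)
    (E : Finset (Fin K × Fin K))
    {Ω : Type*} [MeasurableSpace Ω] (P : Measure Ω) [IsProbabilityMeasure P]
    (T : ℕ → Fin K → Fin K → Ω → Matrix (Fin d) (Fin d) ℝ)
    (p : ℕ → Fin K → Fin K → ℝ)
    (hpnn : ∀ t, 1 ≤ t → ∀ ν μ : Fin K, 0 ≤ p t ν μ)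
    (hprow : ∀ t, 1 ≤ t → ∀ μ ∈ Ml E, ∑ ν ∈ Nin E μ, p t ν μ = 1)
    (hTzero : ∀ t, 1 ≤ t → ∀ μ ν : Fin K,
      ¬ ((μ ∈ Ml E ∧ ν ∈ Nin E μ) ∨ (μ = ν ∧ μ ∈ Mu E)) → ∀ᵐ ω ∂P, T t μ ν ω = 0)
    (hTu : ∀ t, 1 ≤ t → ∀ μ ∈ Mu E, ∀ᵐ ω ∂P, T t μ μ ω = 1)
    (hTbd : ∀ t, 1 ≤ t → ∀ μ ν : Fin K, ∀ᵐ ω ∂P, opNorm (T t μ ν ω) ≤ 1)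
    (γ₁ δ : ℝ) (hγ₁0 : 0 < γ₁) (hγ₁1 : γ₁ < 1) (hδ0 : 0 < δ) (hδ1 : δ < 1)
    (hconc : ∀ t, 1 ≤ t → ∀ μ ∈ Ml E, ∀ ν ∈ Nin E μ,
      P {ω | γ₁ ≤ opNorm (T t μ ν ω - p t ν μ • (1 : Matrix (Fin d) (Fin d) ℝ))} ≤
        ENNReal.ofReal δ) :
    ∀ t s : ℕ, s ≤ t → ∀ ν₁ ν₂ : Fin K,
      ENNReal.ofReal (1 - δ * ∑ j ∈ Finset.Icc 1 (t - s), (Nmax E : ℝ) ^ j) ≤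
        P {ω |
          opNorm (blockOf (Omega (fun r => ofBlocks (Tstar E p r)) t (s + 1)) ν₁ ν₂ -
              blockOf (Omega (fun r => ofBlocks (fun μ ν => T r μ ν ω)) t (s + 1)) ν₁ ν₂) ≤
            γ₁ * ∑ j ∈ Finset.Icc 1 (t - s), (Nmax E : ℝ) ^ j} :=
  stmt7_general E P T p hpnn hprow hTzero hTu hTbd γ₁ δ hγ₁0 hδ0 hconc
end
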